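/- arXiv:2507.05124 — 8 statements merged into one kernel-verified Lean document; each statement's English description precedes it below -/
import Mathlib

section
/- Let ε > 0 and η > 0, and let a, b, c, d be complex numbers each bounded below in absolute value by η and above in absolute value by 2. If |a·conj(b) + c·conj(d)| ≤ ε, then | |conj(a)·c − conj(b)·d| − (|a·c| + |b·d|) | ≤ 4·ε/η. -/
open Complex

lemma amgm_aux (η u v : ℝ) (hη : 0 ≤ η) (hu : 0 ≤ u) (hv : 0 ≤ v) :
    2 * η * Real.sqrt (u * v) ≤ η * u + η * v := by
  have hsu : Real.sqrt u ^ 2 = u := Real.sq_sqrt hu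
  have hsv : Real.sqrt v ^ 2 = v := Real.sq_sqrt hv
  rw [Real.sqrt_mul hu v]
  nlinarith [sq_nonneg (Real.sqrt u - Real.sqrt v), Real.sqrt_nonneg u, Real.sqrt_nonneg v,
    mul_nonneg hη (sq_nonneg (Real.sqrt u - Real.sqrt v))]

lemma final_aux (ε η T S Q : ℝ) (hε : 0 < ε) (hη : 0 < η) (hQ : 0 < Q) (hQle : Q ≤ 2)
    (hS : 2 * η * Q ≤ S) (hT : 0 ≤ T)
    (hfact : |T - S| * (T + S) ≤ 4 * Q ^ 2 * ε) : |T - S| ≤ 4 * ε / η := by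
  rw [le_div_iff₀ hη]
  have hM : 0 ≤ |T - S| := abs_nonneg _
  nlinarith [mul_le_mul_of_nonneg_left hS hM, mul_pos hQ hQ,
    mul_nonneg (mul_nonneg hM hη.le) hQ.le,
    mul_nonneg (sub_nonneg.mpr hQle) (mul_nonneg hε.le hQ.le)]

theorem stmt0 (ε η : ℝ) (hε : 0 < ε) (hη : 0 < η) (a b c d : ℂ)
    (ha1 : η ≤ ‖a‖) (hb1 : η ≤ ‖b‖)
    (hc1 : η ≤ ‖c‖) (hd1 : η ≤ ‖d‖)
    (ha2 : ‖a‖ ≤ 2) (hb2 : ‖b‖ ≤ 2)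
    (hc2 : ‖c‖ ≤ 2) (hd2 : ‖d‖ ≤ 2)
    (h : ‖a * (starRingEnd ℂ) b + c * (starRingEnd ℂ) d‖ ≤ ε) :
    |‖(starRingEnd ℂ) a * c - (starRingEnd ℂ) b * d‖
      - (‖a * c‖ + ‖b * d‖)| ≤ 4 * ε / η := by
  set x : ℂ := (starRingEnd ℂ) a * c with hx
  set y : ℂ := (starRingEnd ℂ) b * d with hy
  set e : ℂ := (starRingEnd ℂ) a * b + (starRingEnd ℂ) c * d with he
  have hη2 : η ≤ 2 := le_trans ha1 ha2
  -- |e| ≤ ε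
  have hea : ‖e‖ ≤ ε := by
    have : e = (starRingEnd ℂ) (a * (starRingEnd ℂ) b + c * (starRingEnd ℂ) d) := by
      simp [he, map_add, map_mul, mul_comm]
    rw [this, Complex.norm_conj]; exact h
  -- ||ab| - |cd|| ≤ ε
  have habcd : |‖a‖ * ‖b‖ - ‖c‖ * ‖d‖| ≤ ε := by
    have h1 : |‖a * (starRingEnd ℂ) b‖ - ‖-(c * (starRingEnd ℂ) d)‖|
        ≤ ‖a * (starRingEnd ℂ) b - (-(c * (starRingEnd ℂ) d))‖ :=
      abs_norm_sub_norm_le _ _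
    rw [sub_neg_eq_add] at h1
    simpa [norm_mul, Complex.norm_conj] using h1.trans h
  -- key identity for x * conj y
  have key : x * (starRingEnd ℂ) y =
      e * (c * (starRingEnd ℂ) d) - (c * (starRingEnd ℂ) c) * (d * (starRingEnd ℂ) d) := by
    simp only [hx, hy, he, map_mul, Complex.conj_conj, map_add]
    ring
  set A := ‖a‖
  set B := ‖b‖
  set C := ‖c‖
  set D := ‖d‖
  set r : ℝ := (e * (c * (starRingEnd ℂ) d)).re with hr
  have hCpos : (0:ℝ) < C := lt_of_lt_of_le hη hc1
  have hDpos : (0:ℝ) < D := lt_of_lt_of_le hη hd1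
  have hre : (x * (starRingEnd ℂ) y).re = r - C * C * (D * D) := by
    rw [key, Complex.sub_re]
    have h2 : (c * (starRingEnd ℂ) c) * (d * (starRingEnd ℂ) d)
        = ((Complex.normSq c * Complex.normSq d : ℝ) : ℂ) := by
      rw [Complex.mul_conj, Complex.mul_conj, Complex.ofReal_mul]
    rw [h2, Complex.ofReal_re, Complex.normSq_eq_norm_sq, Complex.normSq_eq_norm_sq, ← hr]
    ring
  have hrbound : |r| ≤ ε * (C * D) := by
    calc |r| ≤ ‖e * (c * (starRingEnd ℂ) d)‖ := Complex.abs_re_le_norm _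
    _ = ‖e‖ * (C * D) := by simp [norm_mul, Complex.norm_conj, C, D]
    _ ≤ ε * (C * D) := by
        apply mul_le_mul_of_nonneg_right hea
        positivity
  -- T and S
  set T := ‖x - y‖ with hT
  have hS : ‖a * c‖ + ‖b * d‖ = A * C + B * D := by
    simp [norm_mul, A, B, C, D]
  rw [hS]
  set S := A * C + B * D with hSdef
  have hxabs : ‖x‖ = A * C := by simp [hx, norm_mul, Complex.norm_conj, A, C]
  have hyabs : ‖y‖ = B * D := by simp [hy, norm_mul, Complex.norm_conj, B, D]
  -- T^2
  have hT2 : T ^ 2 = (A * C) ^ 2 + (B * D) ^ 2 - 2 * (x * (starRingEnd ℂ) y).re := by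
    rw [hT, Complex.sq_norm, Complex.normSq_sub, Complex.normSq_eq_norm_sq, Complex.normSq_eq_norm_sq,
      hxabs, hyabs]
  have hdiff : S ^ 2 - T ^ 2 = 2 * (A * B * (C * D) - C * C * (D * D) + r) := by
    rw [hT2, hre, hSdef]; ring
  have hdiffbound : |S ^ 2 - T ^ 2| ≤ 4 * (C * D) * ε := by
    rw [hdiff]
    have hCD : (0:ℝ) ≤ C * D := by positivity
    have h1 : |A * B * (C * D) - C * C * (D * D)| ≤ (C * D) * ε := by
      have : A * B * (C * D) - C * C * (D * D) = (C * D) * (A * B - C * D) := by ring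
      rw [this, abs_mul, _root_.abs_of_nonneg hCD]
      exact mul_le_mul_of_nonneg_left habcd hCD
    calc |2 * (A * B * (C * D) - C * C * (D * D) + r)|
        = 2 * |A * B * (C * D) - C * C * (D * D) + r| := by rw [abs_mul]; norm_num
      _ ≤ 2 * (|A * B * (C * D) - C * C * (D * D)| + |r|) := by
          gcongr; exact abs_add_le _ _
      _ ≤ 2 * ((C * D) * ε + ε * (C * D)) := by gcongr
      _ = 4 * (C * D) * ε := by ring
  -- lower bound on S via sqrt
  set Q := Real.sqrt (C * D) with hQ
  have hQpos : 0 < Q := Real.sqrt_pos.mpr (mul_pos hCpos hDpos)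
  have hQ2 : Q ^ 2 = C * D := Real.sq_sqrt (by positivity)
  have hQle : Q ≤ 2 := by
    rw [hQ]
    have : (2:ℝ) = Real.sqrt 4 := by
      rw [show (4:ℝ) = 2 ^ 2 by norm_num, Real.sqrt_sq (by norm_num)]
    rw [this]
    apply Real.sqrt_le_sqrt
    nlinarith
  have hSge : 2 * η * Q ≤ S := by
    have h1 : η * C + η * D ≤ S := by
      rw [hSdef]
      have := mul_le_mul_of_nonneg_right ha1 (norm_nonneg c)
      have := mul_le_mul_of_nonneg_right hb1 (norm_nonneg d)
      gcongr <;> assumption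
    have h2 : 2 * η * Q ≤ η * C + η * D :=
      amgm_aux η C D hη.le (norm_nonneg c) (norm_nonneg d)
    linarith
  -- finish
  have hTnn : 0 ≤ T := norm_nonneg _
  have hSnn : 0 ≤ S := by positivity
  have hfact : |T - S| * (T + S) ≤ 4 * Q ^ 2 * ε := by
    have heq : |T - S| * (T + S) = |S ^ 2 - T ^ 2| := by
      rw [← _root_.abs_of_nonneg (show (0:ℝ) ≤ T + S by linarith), ← abs_mul]
      rw [show (T - S) * (T + S) = -(S ^ 2 - T ^ 2) by ring, abs_neg]
    rw [heq, hQ2]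
    linarith [hdiffbound]
  exact final_aux ε η T S Q hε hη hQpos hQle hSge hTnn hfact
end

section
/- Let ε > 0 and let a, b, c, d be real numbers each bounded above by √2, satisfying a² + b² + c² + d² = 2 and |a·b − c·d| ≤ ε. Then |(a·c + b·d)²·(a·d + b·c)² − 4·a·b·c·d| ≤ 1000·ε. -/
/-! With `x = ab`, `y = cd`, `u = a² + b²`, `v = c² + d²` one has `(ac + bd)(ad + bc) = xv + yu`,
and `u + v = 2`, `2|x| ≤ u`, `2|y| ≤ v`. Writing `u = 1 - w`, `v = 1 + w` with `|w| ≤ 1`,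
the quantity to bound factors as `(xv + yu)² - 4xy = (x - y)((1 + w²)(x - y) + 2w(x + y))`,
whose second factor is at most `4` in absolute value. So it is at most `4|ab - cd| ≤ 4ε`. -/

theorem two_mul_abs_mul_le_add_sq (a b : ℝ) : 2 * |a * b| ≤ a ^ 2 + b ^ 2 := by
  simpa only [abs_mul, mul_assoc, sq_abs] using two_mul_le_add_sq |a| |b|

theorem abs_sq_mul_add_mul_sub_four_mul_le {x y u v : ℝ} (huv : u + v = 2)
    (hx : 2 * |x| ≤ u) (hy : 2 * |y| ≤ v) :
    |(x * v + y * u) ^ 2 - 4 * (x * y)| ≤ 4 * |x - y| := by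
  obtain ⟨w, rfl, rfl⟩ : ∃ w, u = 1 - w ∧ v = 1 + w := ⟨(v - u) / 2, by linarith, by linarith⟩
  have hw : |w| ≤ 1 := abs_le.2 ⟨by linarith [abs_nonneg y], by linarith [abs_nonneg x]⟩
  have hsub : |x - y| ≤ 1 := (abs_sub _ _).trans (by linarith)
  have hadd : |x + y| ≤ 1 := (abs_add_le _ _).trans (by linarith)
  have hfactor : (x * (1 + w) + y * (1 - w)) ^ 2 - 4 * (x * y)
      = (x - y) * ((1 + w ^ 2) * (x - y) + 2 * w * (x + y)) := by
    ring
  have hw2 : w ^ 2 ≤ 1 := by rwa [sq_le_one_iff_abs_le_one]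
  rw [hfactor, abs_mul, mul_comm]
  gcongr
  calc |(1 + w ^ 2) * (x - y) + 2 * w * (x + y)|
      ≤ (1 + w ^ 2) * |x - y| + 2 * |w| * |x + y| := by
        refine (abs_add_le _ _).trans ?_
        rw [abs_mul, abs_mul, abs_of_pos (by positivity : (0 : ℝ) < 1 + w ^ 2), abs_mul, abs_two]
    _ ≤ 2 * 1 + 2 * 1 * 1 := by gcongr; linarith
    _ = 4 := by norm_num

theorem stmt1_general (ε : ℝ) (a b c d : ℝ)
    (hsum : a ^ 2 + b ^ 2 + c ^ 2 + d ^ 2 = 2)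
    (hab : |a * b - c * d| ≤ ε) :
    |(a * c + b * d) ^ 2 * (a * d + b * c) ^ 2 - 4 * (a * b * c * d)| ≤ 1000 * ε := by
  have hbound := abs_sq_mul_add_mul_sub_four_mul_le (x := a * b) (y := c * d)
    (u := a ^ 2 + b ^ 2) (v := c ^ 2 + d ^ 2) (by linarith)
    (two_mul_abs_mul_le_add_sq a b) (two_mul_abs_mul_le_add_sq c d)
  have hexpand : (a * c + b * d) ^ 2 * (a * d + b * c) ^ 2 - 4 * (a * b * c * d)
      = (a * b * (c ^ 2 + d ^ 2) + c * d * (a ^ 2 + b ^ 2)) ^ 2 - 4 * (a * b * (c * d)) := by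
    ring
  rw [hexpand]
  linarith [abs_nonneg (a * b - c * d)]

theorem stmt1 (ε : ℝ) (hε : 0 < ε) (a b c d : ℝ)
    (ha : a ≤ Real.sqrt 2) (hb : b ≤ Real.sqrt 2)
    (hc : c ≤ Real.sqrt 2) (hd : d ≤ Real.sqrt 2)
    (hsum : a ^ 2 + b ^ 2 + c ^ 2 + d ^ 2 = 2)
    (hab : |a * b - c * d| ≤ ε) :
    |(a * c + b * d) ^ 2 * (a * d + b * c) ^ 2 - 4 * (a * b * c * d)| ≤ 1000 * ε :=
  stmt1_general ε a b c d hsum hab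
end

section
/- Let a, m be positive reals, b, c nonnegative reals with b ≤ a, ζ a real number, and J ⊂ ℝ an interval with length |J| > 10/m. Then ∫_J (√(a + b·sin(m(x − ζ))) − c)² dx ≥ 10⁻² · b² · |J| / a. -/
open Real intervalIntegral

lemma ptwise (a b s : ℝ) (ha : 0 < a) (hb : 0 ≤ b) (hba : b ≤ a) (hs : |s| ≤ 1) :
    16*a*Real.sqrt a * Real.sqrt (a + b*s) ≤ 16*a^2 + 8*a*b*s - b^2*s^2 := by
  have hs1 : -1 ≤ s := neg_le_of_abs_le hs
  have hs2 : s ≤ 1 := le_of_abs_le hs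
  have hbs1 : -a ≤ b*s := by nlinarith
  have hbs2 : b*s ≤ a := by nlinarith
  have hb2 : (b*s)^2 ≤ a^2 := sq_le_sq' hbs1 hbs2
  have habs : 0 ≤ a + b*s := by linarith
  have hR : 0 ≤ 16*a^2 + 8*a*b*s - b^2*s^2 := by
    nlinarith [mul_le_mul_of_nonneg_left hbs1 ha.le]
  have hu : Real.sqrt a ^ 2 = a := Real.sq_sqrt ha.le
  have hv : Real.sqrt (a + b*s) ^ 2 = a + b*s := Real.sq_sqrt habs
  have hLsq : (16*a*Real.sqrt a * Real.sqrt (a + b*s))^2 = 256*a^3*(a+b*s) := by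
    rw [mul_pow, mul_pow, hu, hv]; ring
  have hq : 0 ≤ 32*a^2 - 16*a*(b*s) + (b*s)^2 := by
    nlinarith [sq_nonneg (b*s), mul_le_mul_of_nonneg_left hbs2 ha.le]
  have hsq : (16*a*Real.sqrt a * Real.sqrt (a + b*s))^2 ≤ (16*a^2 + 8*a*b*s - b^2*s^2)^2 := by
    nlinarith [hLsq, mul_nonneg (sq_nonneg (b*s)) hq]
  have hL0 : 0 ≤ 16*a*Real.sqrt a * Real.sqrt (a + b*s) := by positivity
  nlinarith [hsq, hL0, hR]

lemma sin_int (m ζ p q : ℝ) (hm : 0 < m) :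
    ∫ x in p..q, Real.sin (m*(x-ζ)) =
      (Real.cos (m*(p-ζ)) - Real.cos (m*(q-ζ)))/m := by
  have hd : ∀ x ∈ Set.uIcc p q, HasDerivAt (fun y => -Real.cos (m*(y-ζ))/m)
      (Real.sin (m*(x-ζ))) x := by
    intro x _
    have h1 : HasDerivAt (fun y : ℝ => m*(y-ζ)) m x := by
      simpa using ((hasDerivAt_id x).sub_const ζ).const_mul m
    have h2 := ((Real.hasDerivAt_cos (m*(x-ζ))).comp x h1).neg.div_const m
    refine h2.congr_deriv ?_
    field_simp
  rw [intervalIntegral.integral_eq_sub_of_hasDerivAt hd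
    (Continuous.intervalIntegrable (by continuity) _ _)]
  ring

lemma sinsq_int (m ζ p q : ℝ) (hm : 0 < m) :
    ∫ x in p..q, Real.sin (m*(x-ζ))^2 =
      (q-p)/2 - (Real.sin (2*(m*(q-ζ))) - Real.sin (2*(m*(p-ζ))))/(4*m) := by
  have hd : ∀ x ∈ Set.uIcc p q, HasDerivAt (fun y => y/2 - Real.sin (2*(m*(y-ζ)))/(4*m))
      (Real.sin (m*(x-ζ))^2) x := by
    intro x _
    have h1 : HasDerivAt (fun y : ℝ => 2*(m*(y-ζ))) (2*m) x := by
      have : HasDerivAt (fun y : ℝ => m*(y-ζ)) m x := by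
        simpa using ((hasDerivAt_id x).sub_const ζ).const_mul m
      simpa [mul_comm] using this.const_mul 2
    have h2 := ((Real.hasDerivAt_sin (2*(m*(x-ζ)))).comp x h1).div_const (4*m)
    have h3 := ((hasDerivAt_id x).div_const 2).sub h2
    refine h3.congr_deriv ?_
    rw [Real.sin_sq]
    field_simp
    rw [show 2*m*(x-ζ) = 2*(m*(x-ζ)) by ring, Real.cos_two_mul]
    ring
  rw [intervalIntegral.integral_eq_sub_of_hasDerivAt hd
    (Continuous.intervalIntegrable (by continuity) _ _)]
  ring

set_option maxHeartbeats 800000 in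
theorem stmt2 (a b c m ζ : ℝ) (ha : 0 < a) (hm : 0 < m)
    (hb : 0 ≤ b) (hc : 0 ≤ c) (hba : b ≤ a)
    (p q : ℝ) (hJ : 10 / m < q - p) :
    (∫ x in p..q, (Real.sqrt (a + b * Real.sin (m * (x - ζ))) - c) ^ 2)
      ≥ (1 / 100) * a⁻¹ * b ^ 2 * (q - p) := by
  have h10m : 0 < 10/m := by positivity
  have hL : 0 < q - p := by linarith
  have hpq : p ≤ q := by linarith
  set S := ∫ x in p..q, Real.sin (m*(x-ζ)) with hSdef
  set Q := ∫ x in p..q, Real.sin (m*(x-ζ))^2 with hQdef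
  set F := ∫ x in p..q, Real.sqrt (a + b * Real.sin (m*(x-ζ))) with hFdef
  have habs : ∀ x : ℝ, 0 ≤ a + b * Real.sin (m*(x-ζ)) := fun x => by
    nlinarith [Real.neg_one_le_sin (m*(x-ζ)), Real.sin_le_one (m*(x-ζ))]
  have hcont_sin : Continuous fun x : ℝ => Real.sin (m*(x-ζ)) := by continuity
  have hcont_f : Continuous fun x : ℝ => Real.sqrt (a + b * Real.sin (m*(x-ζ))) :=
    Real.continuous_sqrt.comp (by continuity)
  -- bounds on S
  have hS2 : S ≤ (q-p)/5 := by
    have h1 : (Real.cos (m*(p-ζ)) - Real.cos (m*(q-ζ)))/m ≤ 2/m := by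
      apply div_le_div_of_nonneg_right ?_ hm.le
      nlinarith [Real.cos_le_one (m*(p-ζ)), Real.neg_one_le_cos (m*(q-ζ))]
    have h2 : (2:ℝ)/m = (10/m)/5 := by ring
    rw [hSdef, sin_int m ζ p q hm]
    linarith
  have hS1 : -((q-p)/5) ≤ S := by
    have h1 : -(2/m) ≤ (Real.cos (m*(p-ζ)) - Real.cos (m*(q-ζ)))/m := by
      rw [neg_div']
      apply div_le_div_of_nonneg_right ?_ hm.le
      nlinarith [Real.neg_one_le_cos (m*(p-ζ)), Real.cos_le_one (m*(q-ζ))]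
    have h2 : (2:ℝ)/m = (10/m)/5 := by ring
    rw [hSdef, sin_int m ζ p q hm]
    linarith
  -- bounds on Q
  have hQbnd : 9*(q-p)/20 ≤ Q ∧ Q ≤ 11*(q-p)/20 := by
    have h1 : (Real.sin (2*(m*(q-ζ))) - Real.sin (2*(m*(p-ζ))))/(4*m) ≤ 2/(4*m) := by
      apply div_le_div_of_nonneg_right ?_ (by positivity : (0:ℝ) ≤ 4*m)
      nlinarith [Real.sin_le_one (2*(m*(q-ζ))), Real.neg_one_le_sin (2*(m*(p-ζ)))]
    have h1' : -(2/(4*m)) ≤ (Real.sin (2*(m*(q-ζ))) - Real.sin (2*(m*(p-ζ))))/(4*m) := by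
      rw [neg_div']
      apply div_le_div_of_nonneg_right ?_ (by positivity : (0:ℝ) ≤ 4*m)
      nlinarith [Real.neg_one_le_sin (2*(m*(q-ζ))), Real.sin_le_one (2*(m*(p-ζ)))]
    have h2 : (2:ℝ)/(4*m) = (10/m)/20 := by ring
    rw [hQdef, sinsq_int m ζ p q hm]
    constructor <;> linarith
  obtain ⟨hQ1, hQ2⟩ := hQbnd
  -- integrability
  have int_sin : IntervalIntegrable (fun x => Real.sin (m*(x-ζ))) MeasureTheory.volume p q :=
    hcont_sin.intervalIntegrable _ _
  have int_f : IntervalIntegrable (fun x => Real.sqrt (a + b * Real.sin (m*(x-ζ)))) MeasureTheory.volume p q :=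
    hcont_f.intervalIntegrable _ _
  -- split integral
  have hsplit : (∫ x in p..q, (Real.sqrt (a + b * Real.sin (m * (x - ζ))) - c) ^ 2)
      = a*(q-p) + b*S - 2*c*F + c^2*(q-p) := by
    have hEq : Set.EqOn (fun x => (Real.sqrt (a + b * Real.sin (m * (x - ζ))) - c) ^ 2)
        (fun x => ((a + b * Real.sin (m*(x-ζ))) + c^2) - (2*c) * Real.sqrt (a + b * Real.sin (m*(x-ζ))))
        (Set.uIcc p q) := by
      intro x _
      simp only
      rw [sub_sq, Real.sq_sqrt (habs x)]
      ring
    rw [intervalIntegral.integral_congr hEq,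
      intervalIntegral.integral_sub
        (((intervalIntegrable_const.add (int_sin.const_mul _)).add intervalIntegrable_const))
        (int_f.const_mul _),
      intervalIntegral.integral_add (intervalIntegrable_const.add (int_sin.const_mul _)) intervalIntegrable_const,
      intervalIntegral.integral_add intervalIntegrable_const (int_sin.const_mul _),
      intervalIntegral.integral_const, intervalIntegral.integral_const,
      intervalIntegral.integral_const_mul, intervalIntegral.integral_const_mul]
    simp only [smul_eq_mul, ← hSdef, ← hFdef]
    ring
  -- F nonneg
  have hF0 : 0 ≤ F := intervalIntegral.integral_nonneg hpq (fun x _ => Real.sqrt_nonneg _)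
  -- integral comparison
  have e2 : ∫ x in p..q, (16*a^2 + 8*a*b*Real.sin (m*(x-ζ)) - b^2*Real.sin (m*(x-ζ))^2)
      = 16*a^2*(q-p) + 8*a*b*S - b^2*Q := by
    rw [intervalIntegral.integral_sub (intervalIntegrable_const.add (int_sin.const_mul _))
        ((show IntervalIntegrable (fun x => Real.sin (m*(x-ζ))^2) MeasureTheory.volume p q from (hcont_sin.pow 2).intervalIntegrable p q).const_mul _),
      intervalIntegral.integral_add intervalIntegrable_const (int_sin.const_mul _),
      intervalIntegral.integral_const, intervalIntegral.integral_const_mul,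
      intervalIntegral.integral_const_mul]
    simp only [smul_eq_mul, ← hSdef, ← hQdef]
    ring
  have hFW : 16*a*Real.sqrt a*F ≤ 16*a^2*(q-p) + 8*a*b*S - b^2*Q := by
    rw [hFdef, ← intervalIntegral.integral_const_mul, ← e2]
    apply intervalIntegral.integral_mono_on hpq (int_f.const_mul _)
      ((intervalIntegrable_const.add (int_sin.const_mul _)).sub
        (((hcont_sin.pow 2).intervalIntegrable p q).const_mul _))
    intro x _
    exact ptwise a b _ ha hb hba
      (abs_le.mpr ⟨Real.neg_one_le_sin _, Real.sin_le_one _⟩)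
  have hW0 : 0 ≤ 16*a*Real.sqrt a*F := by
    have : 0 ≤ 16*a*Real.sqrt a := by positivity
    exact mul_nonneg this hF0
  have hsqA : (16*a*Real.sqrt a*F)^2 = 256*a^3*F^2 := by
    have h := Real.sq_sqrt ha.le
    calc (16*a*Real.sqrt a*F)^2 = 256*a^2*(Real.sqrt a^2)*F^2 := by ring
    _ = 256*a^3*F^2 := by rw [h]; ring
  have hWsq : 256*a^3*F^2 ≤ (16*a^2*(q-p) + 8*a*b*S - b^2*Q)^2 := by
    rw [← hsqA]
    exact pow_le_pow_left₀ hW0 hFW 2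
  -- key algebraic inequality
  have hab0 : 0 ≤ a*b := mul_nonneg ha.le hb
  have h8ab : (0:ℝ) ≤ 8*(a*b) := by positivity
  have hs2' : 8*(a*b)*S ≤ 8*(a*b)*((q-p)/5) := mul_le_mul_of_nonneg_left hS2 h8ab
  have hs1' : 8*(a*b)*(-((q-p)/5)) ≤ 8*(a*b)*S := mul_le_mul_of_nonneg_left hS1 h8ab
  have hQ0 : 0 ≤ Q := le_trans (by linarith) hQ1
  have hbbQ : 0 ≤ b^2*Q := mul_nonneg (sq_nonneg b) hQ0
  have hbbQ2 : b^2*Q ≤ (a*b)*(11*(q-p)/20) := by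
    have e1 : b^2*Q ≤ b^2*(11*(q-p)/20) := mul_le_mul_of_nonneg_left hQ2 (sq_nonneg b)
    have e2 : 0 ≤ ((a-b)*b)*(11*(q-p)/20) :=
      mul_nonneg (mul_nonneg (by linarith) hb) (by linarith)
    nlinarith [e1, e2]
  have habL : 0 ≤ (a*b)*(q-p) := mul_nonneg hab0 hL.le
  have hX1 : 8*a*b*S - b^2*Q ≤ (43/20)*(a*b*(q-p)) := by linarith
  have hX2 : -((43/20)*(a*b*(q-p))) ≤ 8*a*b*S - b^2*Q := by linarith
  have hXsq : (8*a*b*S - b^2*Q)^2 ≤ ((43/20)*(a*b*(q-p)))^2 := sq_le_sq' hX2 hX1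
  have hQ32 : 32*(a^2*b^2*(q-p))*(9*(q-p)/20) ≤ 32*(a^2*b^2*(q-p))*Q := by
    apply mul_le_mul_of_nonneg_left hQ1
    positivity
  have hkey : (16*a^2*(q-p) + 8*a*b*S - b^2*Q)^2 + (256/100)*a^2*b^2*(q-p)^2
      ≤ 256*a^3*(q-p)*(a*(q-p) + b*S) := by
    nlinarith [hXsq, hQ32, sq_nonneg (a*b*(q-p))]
  -- conclude
  have h3 : (0:ℝ) ≤ 256*a^3*((q-p)*c - F)^2 := by positivity
  rw [ge_iff_le, hsplit,
    show (1/100)*a⁻¹*b^2*(q-p) = ((256/100)*a^2*b^2*(q-p)^2)/(256*a^3*(q-p)) from by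
      field_simp,
    div_le_iff₀ (by positivity)]
  nlinarith [hWsq, hkey, h3]
end

section
/- Let C ≥ 2, n ≥ 2C, s a complex number with |s| = 1, and let x, y be complex numbers with |y − s| ≤ C/n and |s − x| ≥ 2C/n. Then |yⁿ·(x − y)| ≥ e^{-3C}·|s − x|, i.e. e^{3C}·|yⁿ·(x − y)| ≥ |s − x|. -/
theorem stmt7 (C : ℝ) (hC : 2 ≤ C) (n : ℕ) (hn : 2 * C ≤ (n : ℝ))
    (s x y : ℂ) (hs : ‖s‖ = 1)
    (hy : ‖y - s‖ ≤ C / n)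
    (hx : 2 * C / n ≤ ‖s - x‖) :
    ‖s - x‖ ≤ Real.exp (3 * C) * ‖y ^ n * (x - y)‖ := by
  have hn0 : (0:ℝ) < n := by linarith
  have hnne : (n:ℝ) ≠ 0 := hn0.ne'
  have ht0 : 0 ≤ C / n := div_nonneg (by linarith) hn0.le
  have ht2 : C / n ≤ 1/2 := by rw [div_le_iff₀ hn0]; linarith
  -- |y| ≥ 1 - C/n
  have hsy : ‖s - y‖ = ‖y - s‖ := by
    rw [← norm_neg]; ring_nf
  have h1 : ‖s‖ ≤ ‖y‖ + ‖s - y‖ := by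
    calc ‖s‖ = ‖y + (s - y)‖ := by ring_nf
      _ ≤ _ := norm_add_le _ _
  have hyabs : 1 - C / n ≤ ‖y‖ := by
    rw [hs] at h1; rw [hsy] at h1; linarith
  -- exp(-2(C/n)) ≤ 1 - C/n
  have hexp : Real.exp (-(2 * (C/n))) ≤ 1 - C/n := by
    have h1' : 1 + 2*(C/n) ≤ Real.exp (2*(C/n)) := by
      have := Real.add_one_le_exp (2*(C/n)); linarith
    rw [Real.exp_neg, inv_eq_one_div, div_le_iff₀ (Real.exp_pos _)]
    nlinarith [Real.exp_pos (2*(C/n))]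
  -- exp(-2C) ≤ |y|^n
  have hpow : Real.exp (-(2*C)) ≤ ‖y‖ ^ n := by
    have e1 : Real.exp (-(2*C)) = (Real.exp (-(2*(C/n)))) ^ n := by
      rw [← Real.exp_nat_mul]
      congr 1
      field_simp
    rw [e1]
    exact pow_le_pow_left₀ (Real.exp_pos _).le (le_trans hexp hyabs) n
  -- |x - y| ≥ |s-x|/2
  have h2 : ‖s - x‖ ≤ ‖s - y‖ + ‖y - x‖ := by
    calc ‖s - x‖ = ‖(s - y) + (y - x)‖ := by ring_nf
      _ ≤ _ := norm_add_le _ _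
  have hyx : ‖y - x‖ = ‖x - y‖ := by
    rw [← norm_neg]; ring_nf
  have hxy : ‖s - x‖ / 2 ≤ ‖x - y‖ := by
    rw [hsy, hyx] at h2
    have : 2 * (C/n) ≤ ‖s - x‖ := by
      have : 2 * C / n = 2 * (C / n) := by ring
      linarith [this ▸ hx]
    linarith
  -- combine
  rw [norm_mul, norm_pow]
  have hE : Real.exp (3*C) * Real.exp (-(2*C)) = Real.exp C := by
    rw [← Real.exp_add]; ring_nf
  have hC3 : (2:ℝ) ≤ Real.exp C := by
    have := Real.add_one_le_exp C; linarith
  have hA0 : 0 ≤ ‖s - x‖ := norm_nonneg _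
  calc ‖s - x‖ ≤ Real.exp C * (‖s - x‖ / 2) := by nlinarith
    _ = Real.exp (3*C) * Real.exp (-(2*C)) * (‖s - x‖ / 2) := by rw [hE]
    _ ≤ Real.exp (3*C) * (‖y‖^n * ‖x - y‖) := by
        have e0 : 0 ≤ Real.exp (-(2*C)) := (Real.exp_pos _).le
        have e1 : 0 ≤ ‖s-x‖/2 := by linarith
        nlinarith [Real.exp_pos (3*C), mul_le_mul hpow hxy e1 (le_trans e0 hpow)]
end

section
/- Let μ be a complex probability measure on the unit circle 𝕋, and suppose for each n there exist monic polynomials Φ_n, Φ̃_n of degree n with ∫ Φ_n·conj(p) dμ = 0 and ∫ p·conj(Φ̃_n) dμ = 0 for all polynomials p of degree < n (evaluations on 𝕋, where g* = conj(g) on 𝕋). Then for each n there exist unique complex numbers F_{n+1}, F̃_{n+1} such that Φ_{n+1}(z) − z·Φ_n(z) = conj(F_{n+1})·zⁿ·Φ̃_n*(z) and Φ̃_{n+1}(z) − z·Φ̃_n(z) = conj(F̃_{n+1})·zⁿ·Φ_n*(z) for all z, provided additionally that ⟨Φ_n, zⁿ⟩_μ ≠ 0 for all n (uniqueness of the orthogonal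 polynomials). -/
open Polynomial MeasureTheory

set_option linter.unusedSectionVars false

namespace Stmt10

noncomputable def B (ν : Measure ℂ) (w : ℂ → ℂ) (p q : Polynomial ℂ) : ℂ :=
  ∫ z, p.eval z * (starRingEnd ℂ) (q.eval z) * w z ∂ν

variable {ν : Measure ℂ} [IsFiniteMeasure ν] {w : ℂ → ℂ}

lemma integ (hsupp : ∀ᵐ z ∂ν, ‖z‖ = 1) (hwInt : Integrable w ν)
    (f : ℂ → ℂ) (hf : Continuous f) : Integrable (fun z => f z * w z) ν := by
  obtain ⟨C0, hC0⟩ : ∃ C0 : ℝ, ∀ x ∈ Metric.sphere (0:ℂ) 1, ‖f x‖ ≤ C0 :=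
    (isCompact_sphere (0:ℂ) 1).exists_bound_of_continuousOn hf.continuousOn
  refine Integrable.mono' (hwInt.norm.const_mul C0) (hf.aestronglyMeasurable.mul hwInt.aestronglyMeasurable) ?_
  filter_upwards [hsupp] with z hz
  have hzs : z ∈ Metric.sphere (0:ℂ) 1 := by simp [hz]
  calc ‖f z * w z‖ = ‖f z‖ * ‖w z‖ := norm_mul _ _
    _ ≤ C0 * ‖w z‖ := mul_le_mul_of_nonneg_right (hC0 z hzs) (norm_nonneg _)

lemma Bint (hsupp : ∀ᵐ z ∂ν, ‖z‖ = 1) (hwInt : Integrable w ν)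
    (p q : Polynomial ℂ) :
    Integrable (fun z => p.eval z * (starRingEnd ℂ) (q.eval z) * w z) ν :=
  integ hsupp hwInt (fun z => p.eval z * (starRingEnd ℂ) (q.eval z))
    ((p.continuous_aeval).mul (Complex.continuous_conj.comp q.continuous_aeval))

variable (hsupp : ∀ᵐ z ∂ν, ‖z‖ = 1) (hwInt : Integrable w ν)
include hsupp hwInt

lemma B_sub_left (p p' q : Polynomial ℂ) :
    B ν w (p - p') q = B ν w p q - B ν w p' q := by
  unfold B
  rw [← integral_sub (Bint hsupp hwInt p q) (Bint hsupp hwInt p' q)]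
  congr 1; ext z; simp [eval_sub]; ring

lemma B_sub_right (p q q' : Polynomial ℂ) :
    B ν w p (q - q') = B ν w p q - B ν w p q' := by
  unfold B
  rw [← integral_sub (Bint hsupp hwInt p q) (Bint hsupp hwInt p q')]
  congr 1; ext z; simp [eval_sub, map_sub]; ring

lemma B_C_mul_left (a : ℂ) (p q : Polynomial ℂ) :
    B ν w (C a * p) q = a * B ν w p q := by
  unfold B
  rw [← integral_const_mul]
  congr 1; ext z; simp; ring

lemma B_C_mul_right (a : ℂ) (p q : Polynomial ℂ) :
    B ν w p (C a * q) = (starRingEnd ℂ) a * B ν w p q := by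
  unfold B
  rw [← integral_const_mul]
  congr 1; ext z; simp; ring

omit hsupp hwInt in
lemma circ_mul_conj {z : ℂ} (hz : ‖z‖ = 1) : z * (starRingEnd ℂ) z = 1 := by
  rw [Complex.mul_conj, Complex.normSq_eq_norm_sq, hz]; norm_num

lemma B_shift (p q : Polynomial ℂ) : B ν w (X * p) (X * q) = B ν w p q := by
  unfold B
  refine integral_congr_ae ?_
  filter_upwards [hsupp] with z hz
  simp only [eval_mul, eval_X, map_mul]
  have h1 := circ_mul_conj hz
  calc z * eval z p * ((starRingEnd ℂ) z * (starRingEnd ℂ) (eval z q)) * w z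
      = (z * (starRingEnd ℂ) z) * (eval z p * (starRingEnd ℂ) (eval z q) * w z) := by ring
    _ = eval z p * (starRingEnd ℂ) (eval z q) * w z := by rw [h1]; ring

omit hsupp hwInt in
/-- eval of the reflected conjugated polynomial on the circle -/
lemma reflect_eval {q : Polynomial ℂ} {n : ℕ} (hq : q.natDegree ≤ n) {z : ℂ}
    (hz : ‖z‖ = 1) :
    (Polynomial.reflect n (q.map (starRingEnd ℂ))).eval z
      = z ^ n * (starRingEnd ℂ) (q.eval z) := by
  have h1 : z * (starRingEnd ℂ) z = 1 := circ_mul_conj hz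
  letI : Invertible ((starRingEnd ℂ) z) := ⟨z, h1, by rw [mul_comm]; exact h1⟩
  have hdeg : (q.map (starRingEnd ℂ)).natDegree ≤ n := le_trans natDegree_map_le hq
  have key := eval₂_reflect_mul_pow (RingHom.id ℂ) ((starRingEnd ℂ) z) n (q.map (starRingEnd ℂ)) hdeg
  have hinv : (⅟((starRingEnd ℂ) z) : ℂ) = z := rfl
  rw [hinv] at key
  have e1 : eval₂ (RingHom.id ℂ) z (reflect n (q.map (starRingEnd ℂ)))
      = (reflect n (q.map (starRingEnd ℂ))).eval z := rfl
  have e2 : eval₂ (RingHom.id ℂ) ((starRingEnd ℂ) z) (q.map (starRingEnd ℂ))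
      = (q.map (starRingEnd ℂ)).eval ((starRingEnd ℂ) z) := rfl
  rw [e1, e2] at key
  have e3 : (q.map (starRingEnd ℂ)).eval ((starRingEnd ℂ) z) = (starRingEnd ℂ) (q.eval z) := by
    rw [eval_map]
    rw [show ((starRingEnd ℂ) (q.eval z)) = eval₂ ((starRingEnd ℂ).comp (RingHom.id ℂ)) ((starRingEnd ℂ) z) q from hom_eval₂ q (RingHom.id ℂ) (starRingEnd ℂ) z]
    rfl
  rw [e3] at key
  have : (reflect n (q.map (starRingEnd ℂ))).eval z * ((starRingEnd ℂ) z) ^ n * z ^ n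
      = (starRingEnd ℂ) (q.eval z) * z ^ n := by rw [key]
  calc (reflect n (q.map (starRingEnd ℂ))).eval z
      = (reflect n (q.map (starRingEnd ℂ))).eval z * (((starRingEnd ℂ) z) * z) ^ n := by
        rw [mul_comm ((starRingEnd ℂ) z) z, h1]; simp
    _ = (starRingEnd ℂ) (q.eval z) * z ^ n := by rw [mul_pow, ← mul_assoc, this]
    _ = z ^ n * (starRingEnd ℂ) (q.eval z) := mul_comm _ _


lemma B_expand_right (p q : Polynomial ℂ) :
    B ν w p q = ∑ j ∈ Finset.range (q.natDegree + 1),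
      (starRingEnd ℂ) (q.coeff j) * B ν w p (X ^ j) := by
  unfold B
  have h : ∀ z : ℂ, p.eval z * (starRingEnd ℂ) (q.eval z) * w z
      = ∑ j ∈ Finset.range (q.natDegree + 1),
        (starRingEnd ℂ) (q.coeff j) * (p.eval z * (starRingEnd ℂ) ((X ^ j : Polynomial ℂ).eval z) * w z) := by
    intro z
    rw [eval_eq_sum_range (p := q) z, map_sum, Finset.mul_sum, Finset.sum_mul]
    refine Finset.sum_congr rfl fun j _ => ?_
    simp only [eval_pow, eval_X, map_mul]
    ring
  simp_rw [h]
  rw [integral_finset_sum _ (fun j _ => (Bint hsupp hwInt p (X ^ j)).const_mul _)]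
  simp_rw [integral_const_mul]

lemma B_expand_left (p q : Polynomial ℂ) :
    B ν w q p = ∑ j ∈ Finset.range (q.natDegree + 1),
      q.coeff j * B ν w (X ^ j) p := by
  unfold B
  have h : ∀ z : ℂ, q.eval z * (starRingEnd ℂ) (p.eval z) * w z
      = ∑ j ∈ Finset.range (q.natDegree + 1),
        q.coeff j * ((X ^ j : Polynomial ℂ).eval z * (starRingEnd ℂ) (p.eval z) * w z) := by
    intro z
    rw [eval_eq_sum_range (p := q) z, Finset.sum_mul, Finset.sum_mul]
    refine Finset.sum_congr rfl fun j _ => ?_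
    simp only [eval_pow, eval_X]
    ring
  simp_rw [h]
  rw [integral_finset_sum _ (fun j _ => (Bint hsupp hwInt (X ^ j) p).const_mul _)]
  simp_rw [integral_const_mul]

lemma B_reflect_left (q : Polynomial ℂ) {n k : ℕ} (hq : q.natDegree ≤ n) (hk : k ≤ n) :
    B ν w (Polynomial.reflect n (q.map (starRingEnd ℂ))) (X ^ k) = B ν w (X ^ (n - k)) q := by
  unfold B
  refine integral_congr_ae ?_
  filter_upwards [hsupp] with z hz
  rw [reflect_eval hq hz]
  simp only [eval_pow, eval_X, map_pow]
  have h1 : z * (starRingEnd ℂ) z = 1 := circ_mul_conj hz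
  have h2 : z ^ n * ((starRingEnd ℂ) z) ^ k = z ^ (n - k) := by
    have e : (n - k) + k = n := Nat.sub_add_cancel hk
    calc z ^ n * ((starRingEnd ℂ) z) ^ k = z ^ (n - k) * z ^ k * ((starRingEnd ℂ) z) ^ k := by
          rw [← pow_add, e]
      _ = z ^ (n - k) * (z * (starRingEnd ℂ) z) ^ k := by rw [mul_pow]; ring
      _ = z ^ (n - k) := by rw [h1, one_pow, mul_one]
  calc z ^ n * (starRingEnd ℂ) (q.eval z) * ((starRingEnd ℂ) z) ^ k * w z
      = z ^ n * ((starRingEnd ℂ) z) ^ k * (starRingEnd ℂ) (q.eval z) * w z := by ring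
    _ = z ^ (n - k) * (starRingEnd ℂ) (q.eval z) * w z := by rw [h2]

lemma B_reflect_right (q : Polynomial ℂ) {n k : ℕ} (hq : q.natDegree ≤ n) (hk : k ≤ n) :
    B ν w (X ^ k) (Polynomial.reflect n (q.map (starRingEnd ℂ))) = B ν w q (X ^ (n - k)) := by
  unfold B
  refine integral_congr_ae ?_
  filter_upwards [hsupp] with z hz
  rw [reflect_eval hq hz]
  simp only [eval_pow, eval_X, map_mul, map_pow, RingHomCompTriple.comp_apply,
    Complex.conj_conj, RingHom.id_apply]
  have h1 : z * (starRingEnd ℂ) z = 1 := circ_mul_conj hz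
  have h2 : z ^ k * ((starRingEnd ℂ) z) ^ n = ((starRingEnd ℂ) z) ^ (n - k) := by
    have e : k + (n - k) = n := Nat.add_sub_cancel' hk
    calc z ^ k * ((starRingEnd ℂ) z) ^ n
        = z ^ k * (((starRingEnd ℂ) z) ^ k * ((starRingEnd ℂ) z) ^ (n - k)) := by
          rw [← pow_add, e]
      _ = (z * (starRingEnd ℂ) z) ^ k * ((starRingEnd ℂ) z) ^ (n - k) := by rw [mul_pow]; ring
      _ = ((starRingEnd ℂ) z) ^ (n - k) := by rw [h1, one_pow, one_mul]
  calc z ^ k * ((starRingEnd ℂ) z ^ n * q.eval z) * w z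
      = z ^ k * ((starRingEnd ℂ) z) ^ n * q.eval z * w z := by ring
    _ = q.eval z * ((starRingEnd ℂ) z) ^ (n - k) * w z := by rw [h2]; ring


section Kernel

variable (Φ Φt : ℕ → Polynomial ℂ)
    (hmonic : ∀ n, (Φ n).Monic ∧ (Φ n).natDegree = n)
    (hmonic' : ∀ n, (Φt n).Monic ∧ (Φt n).natDegree = n)
    (hleftB : ∀ n : ℕ, ∀ p : Polynomial ℂ, p.degree < (n : ℕ) → B ν w (Φ n) p = 0)
    (hrightB : ∀ n : ℕ, ∀ p : Polynomial ℂ, p.degree < (n : ℕ) → B ν w p (Φt n) = 0)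
    (hneB : ∀ n : ℕ, B ν w (Φ n) (X ^ n) ≠ 0)

omit hsupp hwInt in
lemma monic_sub_deg {p : Polynomial ℂ} {k : ℕ} (hm : p.Monic) (hd : p.natDegree = k) :
    (p - X ^ k).degree < (k : WithBot ℕ) := by
  have h1 : p.degree = (k : WithBot ℕ) := by rw [degree_eq_natDegree hm.ne_zero, hd]
  have h2 : (X ^ k : Polynomial ℂ).degree = (k : WithBot ℕ) := degree_X_pow k
  have := degree_sub_lt (h1.trans h2.symm) hm.ne_zero
    (by rw [hm.leadingCoeff, leadingCoeff_X_pow])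
  rwa [h1] at this

include hmonic hmonic' hleftB hrightB in
lemma diag_left (k : ℕ) : B ν w (Φt k) (Φt k) = B ν w (Φ k) (X ^ k) := by
  have e1 : B ν w (Φt k) (Φt k) = B ν w (X ^ k) (Φt k) := by
    have h := hrightB k _ (monic_sub_deg (hmonic' k).1 (hmonic' k).2)
    rw [B_sub_left hsupp hwInt] at h
    linear_combination h
  have e2 : B ν w (X ^ k) (Φt k) = B ν w (Φ k) (Φt k) := by
    have hd : (X ^ k - Φ k).degree < (k : WithBot ℕ) := by
      rw [show (X ^ k - Φ k : Polynomial ℂ) = -(Φ k - X ^ k) from by ring, degree_neg]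
      exact monic_sub_deg (hmonic k).1 (hmonic k).2
    have h := hrightB k _ hd
    rw [B_sub_left hsupp hwInt] at h
    linear_combination h
  have e3 : B ν w (Φ k) (Φt k) = B ν w (Φ k) (X ^ k) := by
    have h := hleftB k _ (monic_sub_deg (hmonic' k).1 (hmonic' k).2)
    rw [B_sub_right hsupp hwInt] at h
    linear_combination h
  rw [e1, e2, e3]

include hmonic hleftB in
lemma diag_right (k : ℕ) : B ν w (Φ k) (Φ k) = B ν w (Φ k) (X ^ k) := by
  have h := hleftB k _ (monic_sub_deg (hmonic k).1 (hmonic k).2)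
  rw [B_sub_right hsupp hwInt] at h
  linear_combination h

include hmonic hmonic' hleftB hrightB hneB in
lemma kernel_left {n : ℕ} {S : Polynomial ℂ} (hS : S.degree < (n : ℕ))
    (h : ∀ j, j < n → B ν w S (X ^ j) = 0) : S = 0 := by
  by_contra hS0
  set d := S.natDegree with hd
  have hdn : d < n := (natDegree_lt_iff_degree_lt hS0).2 hS
  set c := S.leadingCoeff with hc
  have hc0 : c ≠ 0 := leadingCoeff_ne_zero.2 hS0
  have hexp : B ν w S (Φt d) = 0 := by
    rw [B_expand_right hsupp hwInt]
    refine Finset.sum_eq_zero fun j hj => ?_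
    have hj' : j < n := by
      have h1 := Finset.mem_range.1 hj
      have h2 := (hmonic' d).2
      omega
    rw [h j hj', mul_zero]
  have hT : (S - C c * Φt d).degree < (d : WithBot ℕ) := by
    have hdeg : (C c * Φt d).degree = S.degree := by
      rw [degree_C_mul hc0, degree_eq_natDegree hS0, degree_eq_natDegree (hmonic' d).1.ne_zero,
        (hmonic' d).2]
    have := degree_sub_lt hdeg.symm hS0
      (by rw [leadingCoeff_mul, leadingCoeff_C, (hmonic' d).1.leadingCoeff, mul_one])
    rwa [degree_eq_natDegree hS0, hd] at this
  have hBT := hrightB d _ hT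
  rw [B_sub_left hsupp hwInt, B_C_mul_left hsupp hwInt, hexp,
    diag_left hsupp hwInt Φ Φt hmonic hmonic' hleftB hrightB d] at hBT
  have : c * B ν w (Φ d) (X ^ d) = 0 := by linear_combination -hBT
  exact (mul_ne_zero hc0 (hneB d)) this

include hmonic hleftB hneB in
lemma kernel_right {n : ℕ} {S : Polynomial ℂ} (hS : S.degree < (n : ℕ))
    (h : ∀ j, j < n → B ν w (X ^ j) S = 0) : S = 0 := by
  by_contra hS0
  set d := S.natDegree with hd
  have hdn : d < n := (natDegree_lt_iff_degree_lt hS0).2 hS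
  set c := S.leadingCoeff with hc
  have hc0 : c ≠ 0 := leadingCoeff_ne_zero.2 hS0
  have hexp : B ν w (Φ d) S = 0 := by
    rw [B_expand_left hsupp hwInt]
    refine Finset.sum_eq_zero fun j hj => ?_
    have hj' : j < n := by
      have h1 := Finset.mem_range.1 hj
      have h2 := (hmonic d).2
      omega
    rw [h j hj', mul_zero]
  have hT : (S - C c * Φ d).degree < (d : WithBot ℕ) := by
    have hdeg : (C c * Φ d).degree = S.degree := by
      rw [degree_C_mul hc0, degree_eq_natDegree hS0, degree_eq_natDegree (hmonic d).1.ne_zero,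
        (hmonic d).2]
    have := degree_sub_lt hdeg.symm hS0
      (by rw [leadingCoeff_mul, leadingCoeff_C, (hmonic d).1.leadingCoeff, mul_one])
    rwa [degree_eq_natDegree hS0, hd] at this
  have hBT := hleftB d _ hT
  rw [B_sub_right hsupp hwInt, B_C_mul_right hsupp hwInt, hexp,
    diag_right hsupp hwInt Φ hmonic hleftB d] at hBT
  have : (starRingEnd ℂ) c * B ν w (Φ d) (X ^ d) = 0 := by linear_combination -hBT
  exact (mul_ne_zero (by simpa using hc0) (hneB d)) this

include hmonic' in
omit hsupp hwInt in
lemma Q_facts (n : ℕ) :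
    (Polynomial.reflect n ((Φt n).map (starRingEnd ℂ))).coeff 0 = 1 ∧
    (Polynomial.reflect n ((Φt n).map (starRingEnd ℂ))).degree ≤ (n : WithBot ℕ) := by
  constructor
  · rw [coeff_reflect, revAt_le (Nat.zero_le n), Nat.sub_zero, coeff_map]
    have : (Φt n).coeff n = 1 := by
      have h := (hmonic' n).1.coeff_natDegree
      rwa [(hmonic' n).2] at h
    rw [this, map_one]
  · refine degree_le_of_natDegree_le (natDegree_le_iff_coeff_eq_zero.2 fun m hm => ?_)
    rw [coeff_reflect, revAt_eq_self_of_lt hm, coeff_map]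
    have : (Φt n).coeff m = 0 := coeff_eq_zero_of_natDegree_lt (by rw [(hmonic' n).2]; exact hm)
    rw [this, map_zero]

include hmonic hmonic' hleftB hrightB hneB in
lemma side_left (n : ℕ) :
    ∃! c : ℂ, Φ (n + 1) - X * Φ n
      = C c * Polynomial.reflect n ((Φt n).map (starRingEnd ℂ)) := by
  set Q : Polynomial ℂ := Polynomial.reflect n ((Φt n).map (starRingEnd ℂ)) with hQ
  set P : Polynomial ℂ := Φ (n + 1) - X * Φ n with hP
  obtain ⟨hQ0, hQdeg⟩ := Q_facts Φt hmonic' n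
  have hQne : Q ≠ 0 := by
    intro h0
    rw [← hQ] at hQ0
    rw [h0] at hQ0
    simp at hQ0
  -- degree of P
  have hXΦmonic : (X * Φ n).Monic := (monic_X.mul (hmonic n).1)
  have hXΦdeg : (X * Φ n).natDegree = n + 1 := by
    rw [natDegree_mul X_ne_zero (hmonic n).1.ne_zero, natDegree_X, (hmonic n).2, add_comm]
  have hPdeg : P.degree ≤ (n : WithBot ℕ) := by
    have h1 : P.degree < ((n + 1 : ℕ) : WithBot ℕ) := by
      have d1 : (Φ (n + 1)).degree = ((n + 1 : ℕ) : WithBot ℕ) := by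
        rw [degree_eq_natDegree (hmonic (n+1)).1.ne_zero, (hmonic (n+1)).2]
      have d2 : (X * Φ n).degree = ((n + 1 : ℕ) : WithBot ℕ) := by
        rw [degree_eq_natDegree hXΦmonic.ne_zero, hXΦdeg]
      have := degree_sub_lt (d1.trans d2.symm) (hmonic (n+1)).1.ne_zero
        (by rw [(hmonic (n+1)).1.leadingCoeff, hXΦmonic.leadingCoeff])
      rw [d1] at this
      exact this
    by_cases hP0 : P = 0
    · rw [hP0, degree_zero]; exact bot_le
    · exact degree_le_of_natDegree_le (Nat.lt_succ_iff.1 ((natDegree_lt_iff_degree_lt hP0).2 h1))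
  set c : ℂ := P.coeff 0 with hc
  set R : Polynomial ℂ := P - C c * Q with hR
  have hR0 : R.coeff 0 = 0 := by
    rw [hR, coeff_sub, coeff_C_mul, hQ0, mul_one, sub_self]
  have hRdeg : R.degree ≤ (n : WithBot ℕ) := by
    refine le_trans (degree_sub_le _ _) (max_le hPdeg ?_)
    exact le_trans (degree_mul_le _ _) (by
      simpa using add_le_add (degree_C_le) hQdeg)
  obtain ⟨S, hS⟩ : (X : Polynomial ℂ) ∣ R := X_dvd_iff.2 hR0
  have hSdeg : S.degree < (n : WithBot ℕ) := by
    by_cases hS0 : S = 0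
    · rw [hS0, degree_zero]; exact WithBot.bot_lt_coe n
    · have hRne : R ≠ 0 := by rw [hS]; exact mul_ne_zero X_ne_zero hS0
      have h1 : R.natDegree ≤ n := natDegree_le_of_degree_le hRdeg
      have h2 : R.natDegree = 1 + S.natDegree := by
        rw [hS, natDegree_mul X_ne_zero hS0, natDegree_X]
      exact (natDegree_lt_iff_degree_lt hS0).1 (by omega)
  have horth : ∀ j, j < n → B ν w S (X ^ j) = 0 := by
    intro j hj
    have e1 : B ν w S (X ^ j) = B ν w R (X ^ (j + 1)) := by
      rw [hS, pow_succ', B_shift hsupp hwInt]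
    have e2 : B ν w P (X ^ (j + 1)) = 0 := by
      rw [hP, B_sub_left hsupp hwInt]
      have l1 : B ν w (Φ (n + 1)) (X ^ (j + 1)) = 0 := by
        refine hleftB (n + 1) _ ?_
        rw [degree_X_pow]
        exact_mod_cast Nat.succ_lt_succ hj
      have l2 : B ν w (X * Φ n) (X ^ (j + 1)) = 0 := by
        rw [pow_succ', B_shift hsupp hwInt]
        refine hleftB n _ ?_
        rw [degree_X_pow]
        exact_mod_cast hj
      rw [l1, l2, sub_zero]
    have e3 : B ν w Q (X ^ (j + 1)) = 0 := by
      rw [hQ, B_reflect_left hsupp hwInt _ (le_of_eq (hmonic' n).2) (Nat.succ_le_of_lt hj)]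
      refine hrightB n _ ?_
      rw [degree_X_pow]
      have : n - (j + 1) < n := by omega
      exact_mod_cast this
    rw [e1, hR, B_sub_left hsupp hwInt, B_C_mul_left hsupp hwInt, e2, e3, mul_zero, sub_zero]
  have hSzero : S = 0 :=
    kernel_left hsupp hwInt Φ Φt hmonic hmonic' hleftB hrightB hneB hSdeg horth
  have hPQ : P = C c * Q := by
    have : R = 0 := by rw [hS, hSzero, mul_zero]
    linear_combination this
  refine ⟨c, hPQ, fun y hy => ?_⟩
  have : C y * Q = C c * Q := by rw [← hy, hPQ]
  have := mul_right_cancel₀ hQne this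
  exact C_inj.1 this

include hmonic hmonic' hleftB hrightB hneB in
lemma side_right (n : ℕ) :
    ∃! c : ℂ, Φt (n + 1) - X * Φt n
      = C c * Polynomial.reflect n ((Φ n).map (starRingEnd ℂ)) := by
  set Q : Polynomial ℂ := Polynomial.reflect n ((Φ n).map (starRingEnd ℂ)) with hQ
  set P : Polynomial ℂ := Φt (n + 1) - X * Φt n with hP
  obtain ⟨hQ0, hQdeg⟩ := Q_facts Φ hmonic n
  have hQne : Q ≠ 0 := by
    intro h0
    rw [← hQ] at hQ0
    rw [h0] at hQ0
    simp at hQ0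
  have hXΦmonic : (X * Φt n).Monic := (monic_X.mul (hmonic' n).1)
  have hXΦdeg : (X * Φt n).natDegree = n + 1 := by
    rw [natDegree_mul X_ne_zero (hmonic' n).1.ne_zero, natDegree_X, (hmonic' n).2, add_comm]
  have hPdeg : P.degree ≤ (n : WithBot ℕ) := by
    have h1 : P.degree < ((n + 1 : ℕ) : WithBot ℕ) := by
      have d1 : (Φt (n + 1)).degree = ((n + 1 : ℕ) : WithBot ℕ) := by
        rw [degree_eq_natDegree (hmonic' (n+1)).1.ne_zero, (hmonic' (n+1)).2]
      have d2 : (X * Φt n).degree = ((n + 1 : ℕ) : WithBot ℕ) := by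
        rw [degree_eq_natDegree hXΦmonic.ne_zero, hXΦdeg]
      have := degree_sub_lt (d1.trans d2.symm) (hmonic' (n+1)).1.ne_zero
        (by rw [(hmonic' (n+1)).1.leadingCoeff, hXΦmonic.leadingCoeff])
      rw [d1] at this
      exact this
    by_cases hP0 : P = 0
    · rw [hP0, degree_zero]; exact bot_le
    · exact degree_le_of_natDegree_le (Nat.lt_succ_iff.1 ((natDegree_lt_iff_degree_lt hP0).2 h1))
  set c : ℂ := P.coeff 0 with hc
  set R : Polynomial ℂ := P - C c * Q with hR
  have hR0 : R.coeff 0 = 0 := by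
    rw [hR, coeff_sub, coeff_C_mul, hQ0, mul_one, sub_self]
  have hRdeg : R.degree ≤ (n : WithBot ℕ) := by
    refine le_trans (degree_sub_le _ _) (max_le hPdeg ?_)
    exact le_trans (degree_mul_le _ _) (by
      simpa using add_le_add (degree_C_le) hQdeg)
  obtain ⟨S, hS⟩ : (X : Polynomial ℂ) ∣ R := X_dvd_iff.2 hR0
  have hSdeg : S.degree < (n : WithBot ℕ) := by
    by_cases hS0 : S = 0
    · rw [hS0, degree_zero]; exact WithBot.bot_lt_coe n
    · have hRne : R ≠ 0 := by rw [hS]; exact mul_ne_zero X_ne_zero hS0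
      have h1 : R.natDegree ≤ n := natDegree_le_of_degree_le hRdeg
      have h2 : R.natDegree = 1 + S.natDegree := by
        rw [hS, natDegree_mul X_ne_zero hS0, natDegree_X]
      exact (natDegree_lt_iff_degree_lt hS0).1 (by omega)
  have horth : ∀ j, j < n → B ν w (X ^ j) S = 0 := by
    intro j hj
    have e1 : B ν w (X ^ j) S = B ν w (X ^ (j + 1)) R := by
      rw [hS, pow_succ', B_shift hsupp hwInt]
    have e2 : B ν w (X ^ (j + 1)) P = 0 := by
      rw [hP, B_sub_right hsupp hwInt]
      have l1 : B ν w (X ^ (j + 1)) (Φt (n + 1)) = 0 := by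
        refine hrightB (n + 1) _ ?_
        rw [degree_X_pow]
        exact_mod_cast Nat.succ_lt_succ hj
      have l2 : B ν w (X ^ (j + 1)) (X * Φt n) = 0 := by
        rw [pow_succ', B_shift hsupp hwInt]
        refine hrightB n _ ?_
        rw [degree_X_pow]
        exact_mod_cast hj
      rw [l1, l2, sub_zero]
    have e3 : B ν w (X ^ (j + 1)) Q = 0 := by
      rw [hQ, B_reflect_right hsupp hwInt _ (le_of_eq (hmonic n).2) (Nat.succ_le_of_lt hj)]
      refine hleftB n _ ?_
      rw [degree_X_pow]
      have : n - (j + 1) < n := by omega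
      exact_mod_cast this
    rw [e1, hR, B_sub_right hsupp hwInt, B_C_mul_right hsupp hwInt, e2, e3, mul_zero, sub_zero]
  have hSzero : S = 0 :=
    kernel_right hsupp hwInt Φ hmonic hleftB hneB hSdeg horth
  have hPQ : P = C c * Q := by
    have : R = 0 := by rw [hS, hSzero, mul_zero]
    linear_combination this
  refine ⟨c, hPQ, fun y hy => ?_⟩
  have : C y * Q = C c * Q := by rw [← hy, hPQ]
  have := mul_right_cancel₀ hQne this
  exact C_inj.1 this

end Kernel
end Stmt10

/-- The generalized Szegő recurrence for left and right orthogonal polynomials of a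
complex probability measure on the unit circle, represented as `w dν` with `ν` a finite
positive measure supported on the circle and `w` an integrable complex density. -/
theorem stmt10 (ν : Measure ℂ) [IsFiniteMeasure ν] (w : ℂ → ℂ)
    (hsupp : ∀ᵐ z ∂ν, ‖z‖ = 1)
    (hwInt : Integrable w ν)
    (hprob : ∫ z, w z ∂ν = 1)
    (Φ Φt : ℕ → Polynomial ℂ)
    (hmonic : ∀ n, (Φ n).Monic ∧ (Φ n).natDegree = n)
    (hmonic' : ∀ n, (Φt n).Monic ∧ (Φt n).natDegree = n)
    (hleft : ∀ n, ∀ p : Polynomial ℂ, p.degree < (n : ℕ) →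
      ∫ z, (Φ n).eval z * (starRingEnd ℂ) (p.eval z) * w z ∂ν = 0)
    (hright : ∀ n, ∀ p : Polynomial ℂ, p.degree < (n : ℕ) →
      ∫ z, p.eval z * (starRingEnd ℂ) ((Φt n).eval z) * w z ∂ν = 0)
    (hne : ∀ n : ℕ, ∫ z, (Φ n).eval z * (starRingEnd ℂ) (z ^ n) * w z ∂ν ≠ 0) :
    ∀ n : ℕ, ∃! FF : ℂ × ℂ,
      Φ (n + 1) - X * Φ n =
        C ((starRingEnd ℂ) FF.1) * Polynomial.reflect n ((Φt n).map (starRingEnd ℂ)) ∧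
      Φt (n + 1) - X * Φt n =
        C ((starRingEnd ℂ) FF.2) * Polynomial.reflect n ((Φ n).map (starRingEnd ℂ)) := by
  intro n
  have hleftB : ∀ m : ℕ, ∀ p : Polynomial ℂ, p.degree < (m : ℕ) →
      Stmt10.B ν w (Φ m) p = 0 := hleft
  have hrightB : ∀ m : ℕ, ∀ p : Polynomial ℂ, p.degree < (m : ℕ) →
      Stmt10.B ν w p (Φt m) = 0 := hright
  have hneB : ∀ m : ℕ, Stmt10.B ν w (Φ m) (X ^ m) ≠ 0 := by
    intro m
    have h : Stmt10.B ν w (Φ m) (X ^ m)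
        = ∫ z, (Φ m).eval z * (starRingEnd ℂ) (z ^ m) * w z ∂ν := by
      unfold Stmt10.B
      simp only [eval_pow, eval_X]
    rw [h]
    exact hne m
  obtain ⟨c1, hc1, u1⟩ :=
    Stmt10.side_left hsupp hwInt Φ Φt hmonic hmonic' hleftB hrightB hneB n
  obtain ⟨c2, hc2, u2⟩ :=
    Stmt10.side_right hsupp hwInt Φ Φt hmonic hmonic' hleftB hrightB hneB n
  refine ⟨((starRingEnd ℂ) c1, (starRingEnd ℂ) c2), ⟨?_, ?_⟩, ?_⟩
  · simpa using hc1
  · simpa using hc2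
  · rintro ⟨y1, y2⟩ ⟨h1, h2⟩
    have e1 : (starRingEnd ℂ) y1 = c1 := u1 _ h1
    have e2 : (starRingEnd ℂ) y2 = c2 := u2 _ h2
    have f1 : y1 = (starRingEnd ℂ) c1 := by rw [← e1, Complex.conj_conj]
    have f2 : y2 = (starRingEnd ℂ) c2 := by rw [← e2, Complex.conj_conj]
    exact Prod.ext f1 f2
end

section
/- Let μ be a complex probability measure on 𝕋 admitting for each n a monic left orthogonal polynomial Φ_n of degree n (i.e., ⟨Φ_n, p⟩_μ = 0 for all polynomials p of degree < n, where ⟨f,g⟩_μ = ∫ f·conj(g) dμ on 𝕋). Then the following are equivalent: (1) ⟨Φ_n, zⁿ⟩_μ ≠ 0 for all n; (2) for each n, Φ_n is the unique monic left orthogonal polynomial of degree n; (3) for each n, the Toeplitz determinant Δ_n = det[(c_{i−j})_{0 ≤ i,j ≤ n}] is nonzero, where c_k = ∫_𝕋 z^k dμ. -/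
open Polynomial MeasureTheory

namespace Stmt11Aux
set_option linter.unusedSectionVars false

noncomputable def inn (ν : Measure ℂ) (w : ℂ → ℂ) (p q : Polynomial ℂ) : ℂ :=
  ∫ z, p.eval z * (starRingEnd ℂ) (q.eval z) * w z ∂ν

variable {ν : Measure ℂ} [IsFiniteMeasure ν] {w : ℂ → ℂ}
  (hsupp : ∀ᵐ z ∂ν, ‖z‖ = 1) (hwInt : Integrable w ν)

lemma poly_bound (p : Polynomial ℂ) {z : ℂ} (hz : ‖z‖ = 1) :
    ‖p.eval z‖ ≤ ∑ i ∈ Finset.range (p.natDegree + 1), ‖p.coeff i‖ := by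
  rw [Polynomial.eval_eq_sum_range]
  refine (norm_sum_le _ _).trans (Finset.sum_le_sum fun i _ => ?_)
  have hz' : ‖z‖ = 1 := hz
  rw [norm_mul, norm_pow, hz']
  simp

include hsupp hwInt in
lemma intble (p q : Polynomial ℂ) :
    Integrable (fun z => p.eval z * (starRingEnd ℂ) (q.eval z) * w z) ν := by
  refine hwInt.bdd_mul (c := (∑ i ∈ Finset.range (p.natDegree + 1), ‖p.coeff i‖) *
      (∑ i ∈ Finset.range (q.natDegree + 1), ‖q.coeff i‖)) ?_ ?_
  · exact (p.continuous.mul (Complex.continuous_conj.comp q.continuous)).aestronglyMeasurable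
  · filter_upwards [hsupp] with z hz
    rw [norm_mul]
    have h1 := poly_bound p hz
    have h2 := poly_bound q hz
    have h2' : ‖(starRingEnd ℂ) (q.eval z)‖ ≤
        ∑ i ∈ Finset.range (q.natDegree + 1), ‖q.coeff i‖ := by
      rw [RCLike.norm_conj]; exact h2
    exact mul_le_mul h1 h2' (norm_nonneg _) ((norm_nonneg _).trans h1)

include hsupp hwInt in
lemma inn_sub_left (p q r : Polynomial ℂ) :
    inn ν w (p - q) r = inn ν w p r - inn ν w q r := by
  unfold inn
  rw [← integral_sub (intble hsupp hwInt p r) (intble hsupp hwInt q r)]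
  congr 1; funext z; simp only [eval_sub]; ring

include hsupp hwInt in
lemma inn_add_left (p q r : Polynomial ℂ) :
    inn ν w (p + q) r = inn ν w p r + inn ν w q r := by
  unfold inn
  rw [← integral_add (intble hsupp hwInt p r) (intble hsupp hwInt q r)]
  congr 1; funext z; simp only [eval_add]; ring

include hsupp hwInt in
lemma inn_add_right (p q r : Polynomial ℂ) :
    inn ν w p (q + r) = inn ν w p q + inn ν w p r := by
  unfold inn
  rw [← integral_add (intble hsupp hwInt p q) (intble hsupp hwInt p r)]
  congr 1; funext z; simp only [eval_add, map_add]; ring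

lemma inn_Cmul_left (c : ℂ) (p q : Polynomial ℂ) :
    inn ν w (Polynomial.C c * p) q = c * inn ν w p q := by
  unfold inn
  rw [← integral_const_mul]
  congr 1; funext z; simp only [eval_mul, eval_C]; ring

lemma inn_Cmul_right (c : ℂ) (p q : Polynomial ℂ) :
    inn ν w p (Polynomial.C c * q) = (starRingEnd ℂ) c * inn ν w p q := by
  unfold inn
  rw [← integral_const_mul]
  congr 1; funext z; simp only [eval_mul, eval_C, map_mul]; ring

include hsupp hwInt in
lemma inn_sum_left {ι : Type*} (s : Finset ι) (f : ι → Polynomial ℂ) (q : Polynomial ℂ) :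
    inn ν w (∑ k ∈ s, f k) q = ∑ k ∈ s, inn ν w (f k) q := by
  unfold inn
  rw [← integral_finset_sum s (fun k _ => intble hsupp hwInt (f k) q)]
  congr 1; funext z
  rw [eval_finset_sum, Finset.sum_mul, Finset.sum_mul]

lemma inn_Xpow_right (p : Polynomial ℂ) (m : ℕ) :
    inn ν w p (X ^ m) = ∫ z, p.eval z * (starRingEnd ℂ) (z ^ m) * w z ∂ν := by
  unfold inn; simp only [eval_pow, eval_X]

variable (Φ : ℕ → Polynomial ℂ)
  (hmonic : ∀ n, (Φ n).Monic ∧ (Φ n).natDegree = n)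
  (hleft : ∀ n, ∀ p : Polynomial ℂ, p.degree < (n : ℕ) → inn ν w (Φ n) p = 0)

include hsupp hwInt hmonic hleft in
lemma zero_of_orth (hκ : ∀ m, inn ν w (Φ m) (X ^ m) ≠ 0) :
    ∀ D : Polynomial ℂ, (∀ j, j ≤ D.natDegree → inn ν w D (X ^ j) = 0) → D = 0 := by
  suffices H : ∀ d : ℕ, ∀ D : Polynomial ℂ, D.natDegree = d →
      (∀ j, j ≤ D.natDegree → inn ν w D (X ^ j) = 0) → D = 0 from
    fun D h => H D.natDegree D rfl h
  intro d
  induction d using Nat.strong_induction_on with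
  | _ d ih =>
  intro D hd horth
  by_contra hD0
  have hc : D.leadingCoeff ≠ 0 := leadingCoeff_ne_zero.mpr hD0
  obtain ⟨hΦm, hΦd⟩ := hmonic D.natDegree
  have hdegΦ : (Φ D.natDegree).degree = (D.natDegree : WithBot ℕ) := by
    rw [Polynomial.degree_eq_natDegree hΦm.ne_zero, hΦd]
  set c := D.leadingCoeff with hcdef
  set D' := D - Polynomial.C c * Φ D.natDegree with hD'def
  have hlt : D'.degree < D.degree := by
    refine Polynomial.degree_sub_lt ?_ hD0 ?_
    · rw [Polynomial.degree_C_mul hc, hdegΦ, Polynomial.degree_eq_natDegree hD0]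
    · rw [Polynomial.leadingCoeff_mul, Polynomial.leadingCoeff_C, hΦm.leadingCoeff, mul_one]
  have hsubval : ∀ j, inn ν w D' (X ^ j) =
      inn ν w D (X ^ j) - c * inn ν w (Φ D.natDegree) (X ^ j) := by
    intro j
    rw [hD'def, inn_sub_left hsupp hwInt, inn_Cmul_left]
  have hD'0 : D' = 0 := by
    by_cases h0 : D' = 0
    · exact h0
    · refine ih D'.natDegree ?_ D' rfl ?_
      · have := Polynomial.natDegree_lt_natDegree h0 hlt
        omega
      · intro j hj
        have hjd : j < D.natDegree := by
          have := Polynomial.natDegree_lt_natDegree h0 hlt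
          omega
        have h1 : inn ν w D (X ^ j) = 0 := horth j hjd.le
        have h2 : inn ν w (Φ D.natDegree) (X ^ j) = 0 := by
          refine hleft _ _ ?_
          rw [Polynomial.degree_X_pow]
          exact_mod_cast hjd
        rw [hsubval, h1, h2, mul_zero, sub_zero]
  have hfin : inn ν w D (X ^ D.natDegree) = c * inn ν w (Φ D.natDegree) (X ^ D.natDegree) := by
    have := hsubval D.natDegree
    rw [hD'0] at this
    have hz : inn ν w (0 : Polynomial ℂ) (X ^ D.natDegree) = 0 := by
      unfold inn; simp
    rw [hz] at this
    linear_combination -this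
  have := horth D.natDegree le_rfl
  rw [hfin] at this
  exact hκ D.natDegree (by
    rcases mul_eq_zero.mp this with h | h
    · exact absurd h hc
    · exact h)

include hsupp hwInt hmonic hleft in
lemma toeplitz_det (n : ℕ) :
    Matrix.det (Matrix.of fun i j : Fin (n + 1) =>
        ∫ z, z ^ (((i : ℤ) - (j : ℤ))) * w z ∂ν)
      = ∏ i : Fin (n + 1), inn ν w (Φ (i : ℕ)) (X ^ (i : ℕ)) := by
  set T : Matrix (Fin (n + 1)) (Fin (n + 1)) ℂ :=
    Matrix.of fun i j : Fin (n + 1) => ∫ z, z ^ (((i : ℤ) - (j : ℤ))) * w z ∂ν with hTdef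
  have hT : ∀ i j : Fin (n + 1), T i j = inn ν w (X ^ (i : ℕ)) (X ^ (j : ℕ)) := by
    intro i j
    refine integral_congr_ae ?_
    filter_upwards [hsupp] with z hz
    have hnorm : ‖z‖ = 1 := hz
    have hz0 : z ≠ 0 := by
      intro h; rw [h] at hnorm; simp at hnorm
    have hconj : (z ^ (j : ℕ))⁻¹ = (starRingEnd ℂ) (z ^ (j : ℕ)) :=
      RCLike.inv_eq_conj (by rw [norm_pow, hnorm, one_pow])
    simp only [eval_pow, eval_X]
    rw [zpow_sub₀ hz0, zpow_natCast, zpow_natCast, div_eq_mul_inv, hconj]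
  set L : Matrix (Fin (n + 1)) (Fin (n + 1)) ℂ :=
    Matrix.of fun i j : Fin (n + 1) => (Φ (i : ℕ)).coeff (j : ℕ) with hLdef
  have hLtri : L.BlockTriangular OrderDual.toDual := by
    intro i j hij
    refine Polynomial.coeff_eq_zero_of_natDegree_lt ?_
    rw [(hmonic (i : ℕ)).2]
    exact_mod_cast hij
  have hLdet : L.det = 1 := by
    rw [Matrix.det_of_lowerTriangular L hLtri]
    refine Finset.prod_eq_one fun i _ => ?_
    show (Φ (i : ℕ)).coeff (i : ℕ) = 1
    have h1 := (hmonic (i : ℕ)).1.coeff_natDegree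
    rwa [(hmonic (i : ℕ)).2] at h1
  have hLT : ∀ i j : Fin (n + 1), (L * T) i j = inn ν w (Φ (i : ℕ)) (X ^ (j : ℕ)) := by
    intro i j
    rw [Matrix.mul_apply]
    have hstep : ∀ k : Fin (n + 1), L i k * T k j =
        inn ν w (Polynomial.C ((Φ (i : ℕ)).coeff (k : ℕ)) * X ^ (k : ℕ)) (X ^ (j : ℕ)) := by
      intro k
      rw [hT, inn_Cmul_left]
      rfl
    rw [Finset.sum_congr rfl fun k _ => hstep k]
    have hrep : Φ (i : ℕ) =
        ∑ k ∈ Finset.range (n + 1), Polynomial.C ((Φ (i : ℕ)).coeff k) * X ^ k := by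
      have := (Φ (i : ℕ)).as_sum_range' (n + 1) (by rw [(hmonic (i : ℕ)).2]; exact i.isLt)
      simpa only [Polynomial.C_mul_X_pow_eq_monomial] using this
    conv_rhs => rw [hrep]
    rw [inn_sum_left hsupp hwInt, ← Fin.sum_univ_eq_sum_range
      (fun k => inn ν w (Polynomial.C ((Φ (i : ℕ)).coeff k) * X ^ k) (X ^ (j : ℕ))) (n + 1)]
  have hMtri : (L * T).BlockTriangular id := by
    intro i j hij
    rw [hLT]
    refine hleft _ _ ?_
    rw [Polynomial.degree_X_pow]
    exact_mod_cast hij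
  calc T.det = L.det * T.det := by rw [hLdet, one_mul]
    _ = (L * T).det := (Matrix.det_mul L T).symm
    _ = ∏ i : Fin (n + 1), (L * T) i i := Matrix.det_of_upperTriangular hMtri
    _ = ∏ i : Fin (n + 1), inn ν w (Φ (i : ℕ)) (X ^ (i : ℕ)) :=
        Finset.prod_congr rfl fun i _ => hLT i i


end Stmt11Aux

open Stmt11Aux

/-- Equivalent characterizations of uniqueness of monic left orthogonal polynomials for a
complex probability measure on the unit circle, represented as `w dν`. -/
theorem stmt11 (ν : Measure ℂ) [IsFiniteMeasure ν] (w : ℂ → ℂ)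
    (hsupp : ∀ᵐ z ∂ν, ‖z‖ = 1)
    (hwInt : Integrable w ν)
    (hprob : ∫ z, w z ∂ν = 1)
    (Φ : ℕ → Polynomial ℂ)
    (hmonic : ∀ n, (Φ n).Monic ∧ (Φ n).natDegree = n)
    (hleft : ∀ n, ∀ p : Polynomial ℂ, p.degree < (n : ℕ) →
      ∫ z, (Φ n).eval z * (starRingEnd ℂ) (p.eval z) * w z ∂ν = 0) :
    ((∀ n : ℕ, ∫ z, (Φ n).eval z * (starRingEnd ℂ) (z ^ n) * w z ∂ν ≠ 0) ↔
      (∀ n : ℕ, ∀ Ψ : Polynomial ℂ, Ψ.Monic → Ψ.natDegree = n →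
        (∀ p : Polynomial ℂ, p.degree < (n : ℕ) →
          ∫ z, Ψ.eval z * (starRingEnd ℂ) (p.eval z) * w z ∂ν = 0) → Ψ = Φ n)) ∧
    ((∀ n : ℕ, ∀ Ψ : Polynomial ℂ, Ψ.Monic → Ψ.natDegree = n →
        (∀ p : Polynomial ℂ, p.degree < (n : ℕ) →
          ∫ z, Ψ.eval z * (starRingEnd ℂ) (p.eval z) * w z ∂ν = 0) → Ψ = Φ n) ↔
      (∀ n : ℕ, Matrix.det (Matrix.of fun i j : Fin (n + 1) =>
        ∫ z, z ^ (((i : ℤ) - (j : ℤ))) * w z ∂ν) ≠ 0)) := by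
  have hleft' : ∀ n, ∀ p : Polynomial ℂ, p.degree < (n : ℕ) → inn ν w (Φ n) p = 0 := hleft
  have hκeq : ∀ n : ℕ, inn ν w (Φ n) (X ^ n) =
      ∫ z, (Φ n).eval z * (starRingEnd ℂ) (z ^ n) * w z ∂ν := fun n => inn_Xpow_right _ _
  simp only [← hκeq]
  -- (1) → (2)
  have h12 : (∀ n : ℕ, inn ν w (Φ n) (X ^ n) ≠ 0) →
      (∀ n : ℕ, ∀ Ψ : Polynomial ℂ, Ψ.Monic → Ψ.natDegree = n →
        (∀ p : Polynomial ℂ, p.degree < (n : ℕ) →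
          ∫ z, Ψ.eval z * (starRingEnd ℂ) (p.eval z) * w z ∂ν = 0) → Ψ = Φ n) := by
    intro h1 n Ψ hΨm hΨd horth
    have horth' : ∀ p : Polynomial ℂ, p.degree < (n : ℕ) → inn ν w Ψ p = 0 := horth
    by_contra hne
    have hΦm := (hmonic n).1
    have hΦd := (hmonic n).2
    have hD0 : Ψ - Φ n ≠ 0 := sub_ne_zero.mpr hne
    have hdegeq : Ψ.degree = (Φ n).degree := by
      rw [Polynomial.degree_eq_natDegree hΨm.ne_zero,
        Polynomial.degree_eq_natDegree hΦm.ne_zero, hΨd, hΦd]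
    have hdlt : (Ψ - Φ n).degree < (n : ℕ) := by
      have := Polynomial.degree_sub_lt hdegeq hΨm.ne_zero
        (by rw [hΨm.leadingCoeff, hΦm.leadingCoeff])
      rwa [Polynomial.degree_eq_natDegree hΨm.ne_zero, hΨd] at this
    refine hD0 (zero_of_orth hsupp hwInt Φ hmonic hleft' h1 (Ψ - Φ n) fun j hj => ?_)
    have hjn : j < n := lt_of_le_of_lt hj ((Polynomial.natDegree_lt_iff_degree_lt hD0).mpr hdlt)
    have hdX : (X ^ j : Polynomial ℂ).degree < (n : ℕ) := by
      rw [Polynomial.degree_X_pow]; exact_mod_cast hjn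
    rw [inn_sub_left hsupp hwInt, horth' _ hdX, hleft' n _ hdX, sub_zero]
  -- (2) → (1)
  have h21 : (∀ n : ℕ, ∀ Ψ : Polynomial ℂ, Ψ.Monic → Ψ.natDegree = n →
        (∀ p : Polynomial ℂ, p.degree < (n : ℕ) →
          ∫ z, Ψ.eval z * (starRingEnd ℂ) (p.eval z) * w z ∂ν = 0) → Ψ = Φ n) →
      (∀ n : ℕ, inn ν w (Φ n) (X ^ n) ≠ 0) := by
    intro h2 n hκ0
    have horthall : ∀ p : Polynomial ℂ, p.degree ≤ (n : ℕ) → inn ν w (Φ n) p = 0 := by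
      intro p hp
      set c := p.coeff n with hcdef
      set r := p - Polynomial.C c * X ^ n with hrdef
      have hrd : r.degree < (n : ℕ) := by
        rw [Polynomial.degree_lt_iff_coeff_zero]
        intro m hm
        rw [hrdef]
        simp only [Polynomial.coeff_sub, Polynomial.coeff_C_mul, Polynomial.coeff_X_pow]
        rcases eq_or_lt_of_le hm with h | h
        · have : m = n := h.symm
          simp [this, hcdef]
        · have hpm : p.coeff m = 0 :=
            Polynomial.coeff_eq_zero_of_degree_lt (lt_of_le_of_lt hp (by exact_mod_cast h))
          have hmn : m ≠ n := by omega
          simp [hpm, hmn]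
      have hdecomp : p = Polynomial.C c * X ^ n + r := by rw [hrdef]; ring
      rw [hdecomp, inn_add_right hsupp hwInt, inn_Cmul_right, hκ0, mul_zero, zero_add,
        hleft' n r hrd]
    have hΦm1 := (hmonic (n + 1)).1
    have hΦm := (hmonic n).1
    have hdΦn1 : (Φ (n + 1)).degree = ((n + 1 : ℕ) : WithBot ℕ) := by
      rw [Polynomial.degree_eq_natDegree hΦm1.ne_zero, (hmonic (n + 1)).2]
    have hdlt : (Φ n).degree < (Φ (n + 1)).degree := by
      rw [hdΦn1, Polynomial.degree_eq_natDegree hΦm.ne_zero, (hmonic n).2]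
      exact_mod_cast n.lt_succ_self
    have hΨm : (Φ (n + 1) + Φ n).Monic := hΦm1.add_of_left hdlt
    have hΨd : (Φ (n + 1) + Φ n).natDegree = n + 1 :=
      Polynomial.natDegree_eq_of_degree_eq_some
        (by rw [Polynomial.degree_add_eq_left_of_degree_lt hdlt, hdΦn1])
    have hΨo : ∀ p : Polynomial ℂ, p.degree < ((n + 1 : ℕ) : WithBot ℕ) →
        inn ν w (Φ (n + 1) + Φ n) p = 0 := by
      intro p hp
      have hple : p.degree ≤ ((n : ℕ) : WithBot ℕ) := by
        rw [Polynomial.degree_le_iff_coeff_zero]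
        intro m hm
        have hnm : n < m := by exact_mod_cast hm
        refine Polynomial.coeff_eq_zero_of_degree_lt (lt_of_lt_of_le hp ?_)
        exact_mod_cast hnm
      rw [inn_add_left hsupp hwInt, hleft' (n + 1) p hp, horthall p hple, add_zero]
    have heq := h2 (n + 1) (Φ (n + 1) + Φ n) hΨm hΨd hΨo
    have hΦn0 : Φ n = 0 := by
      have := add_eq_left.mp heq
      exact this
    exact hΦm.ne_zero hΦn0
  refine ⟨⟨h12, h21⟩, ?_, ?_⟩
  · intro h2 n
    rw [toeplitz_det hsupp hwInt Φ hmonic hleft' n, Finset.prod_ne_zero_iff]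
    intro i _
    exact h21 h2 (i : ℕ)
  · intro h3
    refine h12 fun m => ?_
    have hne := h3 m
    rw [toeplitz_det hsupp hwInt Φ hmonic hleft' m] at hne
    have := Finset.prod_ne_zero_iff.mp hne (Fin.last m) (Finset.mem_univ _)
    simpa using this
end

section
/- Let μ be a complex probability measure on 𝕋 in the class T₋, meaning: for each n there exist unique monic left and right orthogonal polynomials Φ_n, Φ̃_n of degree n, and the Szegő recurrence coefficients satisfy F̃_n = −F_n, i.e. Φ_{n+1} − zΦ_n = conj(F_{n+1})·zⁿ·Φ̃_n* and Φ̃_{n+1} − zΦ̃_n = −conj(F_{n+1})·zⁿ·Φ_n*. Then for all n ≥ 0, ⟨Φ_n, Φ̃_n⟩_μ = ∏_{j=1}^n (1 + |F_j|²). -/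
open Polynomial MeasureTheory


lemma polyBound (P : Polynomial ℂ) {z : ℂ} (hz : ‖z‖ = 1) :
    ‖P.eval z‖ ≤ ∑ i ∈ Finset.range (P.natDegree + 1), ‖P.coeff i‖ := by
  rw [Polynomial.eval_eq_sum_range]
  refine (norm_sum_le _ _).trans (le_of_eq ?_)
  refine Finset.sum_congr rfl fun i _ => ?_
  simp [norm_mul, norm_pow, hz]

lemma integrableAux (ν : Measure ℂ) (w : ℂ → ℂ)
    (hsupp : ∀ᵐ z ∂ν, ‖z‖ = 1)
    (hwInt : Integrable w ν) (P Q : Polynomial ℂ) :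
    Integrable (fun z => P.eval z * (starRingEnd ℂ) (Q.eval z) * w z) ν := by
  set CP := ∑ i ∈ Finset.range (P.natDegree + 1), ‖P.coeff i‖
  set CQ := ∑ i ∈ Finset.range (Q.natDegree + 1), ‖Q.coeff i‖
  refine Integrable.mono' ((hwInt.norm.const_mul (CP * CQ))) ?_ ?_
  · exact ((((P.continuous_aeval).aestronglyMeasurable).mul
      ((Complex.continuous_conj.comp Q.continuous_aeval).aestronglyMeasurable)).mul
      hwInt.aestronglyMeasurable)
  · filter_upwards [hsupp] with z hz
    rw [norm_mul, norm_mul]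
    have h1 : ‖P.eval z‖ ≤ CP := polyBound P hz
    have h2 : ‖(starRingEnd ℂ) (Q.eval z)‖ ≤ CQ := by
      rw [RCLike.norm_conj]; exact polyBound Q hz
    calc ‖P.eval z‖ * ‖(starRingEnd ℂ) (Q.eval z)‖ * ‖w z‖
        ≤ CP * CQ * ‖w z‖ := by
          apply mul_le_mul_of_nonneg_right _ (norm_nonneg _)
          exact mul_le_mul h1 h2 (norm_nonneg _) ((norm_nonneg _).trans h1)
      _ = CP * CQ * ‖w z‖ := rfl

lemma reflectEval (p : Polynomial ℂ) (n : ℕ) (hp : p.natDegree ≤ n) {z : ℂ}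
    (hz : ‖z‖ = 1) :
    (Polynomial.reflect n (p.map (starRingEnd ℂ))).eval z
      = z ^ n * (starRingEnd ℂ) (p.eval z) := by
  have hz0 : z ≠ 0 := by
    intro h; rw [h] at hz; simp at hz
  have hzc : (starRingEnd ℂ) z ≠ 0 := by simpa using hz0
  have hinv : z⁻¹ = (starRingEnd ℂ) z := Complex.inv_eq_conj (by exact hz)
  letI : Invertible ((starRingEnd ℂ) z) := invertibleOfNonzero hzc
  have key := Polynomial.eval₂_reflect_mul_pow (starRingEnd ℂ) ((starRingEnd ℂ) z) n p hp
  have hinvOf : ⅟((starRingEnd ℂ) z) = z := by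
    rw [invOf_eq_inv, ← hinv]; simp [hz0]
  rw [hinvOf] at key
  have h1 : Polynomial.eval₂ (starRingEnd ℂ) z (Polynomial.reflect n p)
      = (Polynomial.reflect n (p.map (starRingEnd ℂ))).eval z := by
    rw [Polynomial.reflect_map, Polynomial.eval_map]
  have h2 : Polynomial.eval₂ (starRingEnd ℂ) ((starRingEnd ℂ) z) p
      = (starRingEnd ℂ) (p.eval z) := Polynomial.eval₂_at_apply _ _
  rw [h1, h2] at key
  have hzz : z * (starRingEnd ℂ) z = 1 := by
    rw [Complex.mul_conj, Complex.normSq_eq_norm_sq, hz]; norm_num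
  have hzn : z ^ n * ((starRingEnd ℂ) z) ^ n = 1 := by
    rw [← mul_pow, hzz, one_pow]
  calc (Polynomial.reflect n (p.map (starRingEnd ℂ))).eval z
      = (Polynomial.reflect n (p.map (starRingEnd ℂ))).eval z
          * (((starRingEnd ℂ) z) ^ n * z ^ n) := by
        rw [mul_comm (((starRingEnd ℂ) z) ^ n), hzn, mul_one]
    _ = ((Polynomial.reflect n (p.map (starRingEnd ℂ))).eval z
          * ((starRingEnd ℂ) z) ^ n) * z ^ n := by ring
    _ = z ^ n * (starRingEnd ℂ) (p.eval z) := by rw [key]; ring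
/-- For a measure in the class `T₋` (unique monic one-sided orthogonal polynomials, with
Szegő coefficients satisfying `F̃ₙ = −Fₙ`), the pairing of the monic left and right
orthogonal polynomials equals `∏ (1 + |Fⱼ|²)`. -/
theorem stmt12 (ν : Measure ℂ) [IsFiniteMeasure ν] (w : ℂ → ℂ)
    (hsupp : ∀ᵐ z ∂ν, ‖z‖ = 1)
    (hwInt : Integrable w ν)
    (hprob : ∫ z, w z ∂ν = 1)
    (Φ Φt : ℕ → Polynomial ℂ) (F : ℕ → ℂ)
    (hmonic : ∀ n, (Φ n).Monic ∧ (Φ n).natDegree = n)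
    (hmonic' : ∀ n, (Φt n).Monic ∧ (Φt n).natDegree = n)
    (hleft : ∀ n, ∀ p : Polynomial ℂ, p.degree < (n : ℕ) →
      ∫ z, (Φ n).eval z * (starRingEnd ℂ) (p.eval z) * w z ∂ν = 0)
    (hright : ∀ n, ∀ p : Polynomial ℂ, p.degree < (n : ℕ) →
      ∫ z, p.eval z * (starRingEnd ℂ) ((Φt n).eval z) * w z ∂ν = 0)
    (hne : ∀ n : ℕ, ∫ z, (Φ n).eval z * (starRingEnd ℂ) (z ^ n) * w z ∂ν ≠ 0)
    (hrec : ∀ n, Φ (n + 1) - X * Φ n =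
      C ((starRingEnd ℂ) (F (n + 1))) *
        Polynomial.reflect n ((Φt n).map (starRingEnd ℂ)))
    (hrec' : ∀ n, Φt (n + 1) - X * Φt n =
      -(C ((starRingEnd ℂ) (F (n + 1))) *
        Polynomial.reflect n ((Φ n).map (starRingEnd ℂ)))) :
    ∀ n : ℕ,
      ∫ z, (Φ n).eval z * (starRingEnd ℂ) ((Φt n).eval z) * w z ∂ν =
        ((∏ j ∈ Finset.range n, (1 + ‖F (j + 1)‖ ^ 2) : ℝ) : ℂ) := by
  have key : ∀ P Q : Polynomial ℂ,
      Integrable (fun z => P.eval z * (starRingEnd ℂ) (Q.eval z) * w z) ν :=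
    fun P Q => integrableAux ν w hsupp hwInt P Q
  have degsub : ∀ n : ℕ, (Φt n - Φ n).degree < (n : ℕ) := by
    intro n
    obtain ⟨hm, hd⟩ := hmonic n
    obtain ⟨hm', hd'⟩ := hmonic' n
    have h1 : (Φt n).degree = (Φ n).degree := by
      rw [Polynomial.degree_eq_natDegree hm'.ne_zero,
        Polynomial.degree_eq_natDegree hm.ne_zero, hd, hd']
    have h2 := Polynomial.degree_sub_lt h1 hm'.ne_zero
      (by rw [hm.leadingCoeff, hm'.leadingCoeff])
    rwa [Polynomial.degree_eq_natDegree hm'.ne_zero, hd'] at h2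
  have eq1 : ∀ n : ℕ,
      ∫ z, (Φ n).eval z * (starRingEnd ℂ) ((Φ n).eval z) * w z ∂ν =
        ∫ z, (Φ n).eval z * (starRingEnd ℂ) ((Φt n).eval z) * w z ∂ν := by
    intro n
    have h0 := hleft n (Φt n - Φ n) (degsub n)
    have hfun : (fun z => (Φ n).eval z * (starRingEnd ℂ) ((Φt n - Φ n).eval z) * w z) =
        fun z => (Φ n).eval z * (starRingEnd ℂ) ((Φt n).eval z) * w z -
          (Φ n).eval z * (starRingEnd ℂ) ((Φ n).eval z) * w z := by
      funext z; simp only [Polynomial.eval_sub, map_sub]; ring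
    rw [show (∫ z, (Φ n).eval z * (starRingEnd ℂ) ((Φt n - Φ n).eval z) * w z ∂ν)
        = ∫ z, ((Φ n).eval z * (starRingEnd ℂ) ((Φt n).eval z) * w z -
          (Φ n).eval z * (starRingEnd ℂ) ((Φ n).eval z) * w z) ∂ν from by rw [hfun],
      integral_sub (key _ _) (key _ _)] at h0
    exact (sub_eq_zero.mp h0).symm
  have eq2 : ∀ n : ℕ,
      ∫ z, (Φt n).eval z * (starRingEnd ℂ) ((Φt n).eval z) * w z ∂ν =
        ∫ z, (Φ n).eval z * (starRingEnd ℂ) ((Φt n).eval z) * w z ∂ν := by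
    intro n
    have h0 := hright n (Φt n - Φ n) (degsub n)
    have hfun : (fun z => (Φt n - Φ n).eval z * (starRingEnd ℂ) ((Φt n).eval z) * w z) =
        fun z => (Φt n).eval z * (starRingEnd ℂ) ((Φt n).eval z) * w z -
          (Φ n).eval z * (starRingEnd ℂ) ((Φt n).eval z) * w z := by
      funext z; simp only [Polynomial.eval_sub]; ring
    rw [show (∫ z, (Φt n - Φ n).eval z * (starRingEnd ℂ) ((Φt n).eval z) * w z ∂ν)
        = ∫ z, ((Φt n).eval z * (starRingEnd ℂ) ((Φt n).eval z) * w z -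
          (Φ n).eval z * (starRingEnd ℂ) ((Φt n).eval z) * w z) ∂ν from by rw [hfun],
      integral_sub (key _ _) (key _ _)] at h0
    exact sub_eq_zero.mp h0
  have hΦrec : ∀ n : ℕ, ∀ z : ℂ, ‖z‖ = 1 →
      (Φ (n+1)).eval z = z * (Φ n).eval z +
        (starRingEnd ℂ) (F (n+1)) * (z ^ n * (starRingEnd ℂ) ((Φt n).eval z)) := by
    intro n z hz
    have h := congrArg (Polynomial.eval z) (hrec n)
    simp only [Polynomial.eval_sub, Polynomial.eval_mul, Polynomial.eval_X,
      Polynomial.eval_C] at h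
    rw [reflectEval (Φt n) n (le_of_eq (hmonic' n).2) hz] at h
    linear_combination h
  have hΦtrec : ∀ n : ℕ, ∀ z : ℂ, ‖z‖ = 1 →
      (Φt (n+1)).eval z = z * (Φt n).eval z -
        (starRingEnd ℂ) (F (n+1)) * (z ^ n * (starRingEnd ℂ) ((Φ n).eval z)) := by
    intro n z hz
    have h := congrArg (Polynomial.eval z) (hrec' n)
    simp only [Polynomial.eval_sub, Polynomial.eval_mul, Polynomial.eval_X,
      Polynomial.eval_C, Polynomial.eval_neg] at h
    rw [reflectEval (Φ n) n (le_of_eq (hmonic n).2) hz] at h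
    linear_combination h
  have step : ∀ n : ℕ,
      (∫ z, (Φ (n+1)).eval z * (starRingEnd ℂ) ((Φt (n+1)).eval z) * w z ∂ν)
        = ((1 + ‖F (n+1)‖ ^ 2 : ℝ) : ℂ) *
          ∫ z, (Φ n).eval z * (starRingEnd ℂ) ((Φt n).eval z) * w z ∂ν := by
    intro n
    set K : ℂ := ((1 + ‖F (n+1)‖ ^ 2 : ℝ) : ℂ) with hK
    have hKval : K = 1 + F (n+1) * (starRingEnd ℂ) (F (n+1)) := by
      rw [hK, Complex.mul_conj, Complex.normSq_eq_norm_sq]; push_cast; ring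
    have pointwise : ∀ᵐ z ∂ν,
        (Φ (n+1)).eval z * (starRingEnd ℂ) ((Φ (n+1)).eval z) * w z +
          (Φt (n+1)).eval z * (starRingEnd ℂ) ((Φt (n+1)).eval z) * w z
        = K • ((Φ n).eval z * (starRingEnd ℂ) ((Φ n).eval z) * w z +
            (Φt n).eval z * (starRingEnd ℂ) ((Φt n).eval z) * w z) := by
      filter_upwards [hsupp] with z hz
      have ha := hΦrec n z hz
      have hb := hΦtrec n z hz
      have hzz : z * (starRingEnd ℂ) z = 1 := by
        rw [Complex.mul_conj, Complex.normSq_eq_norm_sq, hz]; norm_num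
      have hzn : z ^ n * ((starRingEnd ℂ) z) ^ n = 1 := by
        rw [← mul_pow, hzz, one_pow]
      rw [smul_eq_mul, hKval, ha, hb]
      simp only [map_add, map_mul, map_sub, map_pow, Complex.conj_conj]
      linear_combination
        (((Φ n).eval z * (starRingEnd ℂ) ((Φ n).eval z) +
          (Φt n).eval z * (starRingEnd ℂ) ((Φt n).eval z)) * w z) * hzz +
        ((F (n+1) * (starRingEnd ℂ) (F (n+1)) *
          ((Φ n).eval z * (starRingEnd ℂ) ((Φ n).eval z) +
           (Φt n).eval z * (starRingEnd ℂ) ((Φt n).eval z))) * w z) * hzn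
    have hmain :
        (∫ z, (Φ (n+1)).eval z * (starRingEnd ℂ) ((Φ (n+1)).eval z) * w z ∂ν) +
          (∫ z, (Φt (n+1)).eval z * (starRingEnd ℂ) ((Φt (n+1)).eval z) * w z ∂ν)
        = K • ((∫ z, (Φ n).eval z * (starRingEnd ℂ) ((Φ n).eval z) * w z ∂ν) +
            (∫ z, (Φt n).eval z * (starRingEnd ℂ) ((Φt n).eval z) * w z ∂ν)) := by
      rw [← integral_add (key _ _) (key _ _), ← integral_add (key _ _) (key _ _),
        integral_congr_ae pointwise, integral_smul]
    rw [eq1 (n+1), eq2 (n+1), eq1 n, eq2 n, smul_eq_mul] at hmain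
    have h2 : 2 * (∫ z, (Φ (n+1)).eval z * (starRingEnd ℂ) ((Φt (n+1)).eval z) * w z ∂ν)
        = 2 * (K * ∫ z, (Φ n).eval z * (starRingEnd ℂ) ((Φt n).eval z) * w z ∂ν) := by
      linear_combination hmain
    exact mul_left_cancel₀ two_ne_zero h2
  intro n
  induction n with
  | zero =>
    have h1 : Φ 0 = 1 := (Polynomial.Monic.natDegree_eq_zero (hmonic 0).1).mp (hmonic 0).2
    have h2 : Φt 0 = 1 := (Polynomial.Monic.natDegree_eq_zero (hmonic' 0).1).mp (hmonic' 0).2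
    simp [h1, h2, hprob]
  | succ n ih =>
    rw [step n, ih, Finset.prod_range_succ]
    push_cast
    ring
end

section
/- Suppose φ_n, φ̃_n satisfy the recursion φ_{n+1} = (1+|F_{n+1}|²)^{−1/2}(z·φ_n + zⁿ·conj(F_{n+1})·φ̃_n*), φ̃_{n+1} = (1+|F_{n+1}|²)^{−1/2}(z·φ̃_n − zⁿ·conj(F_{n+1})·φ_n*) with φ_0 = φ̃_0 = 1, and define K_n(z,λ) = Σ_{j=0}^n φ̃_j(z)·φ_j*(λ). Then for all n ≥ 0 and all λ ≠ 0 and all z: (1 − z/λ)·K_n(z,λ) = (z^{n+1}/λ^{n+1})·φ_{n+1}*(z)·φ̃_{n+1}(λ) − φ̃_{n+1}(z)·φ_{n+1}*(λ). -/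
open Polynomial

lemma aux_reflect_reflect {R : Type*} [Semiring R] (N : ℕ) (f : R[X]) :
    reflect N (reflect N f) = f := by
  ext i
  simp [coeff_reflect, revAt_invol]

lemma aux_natDegree_reflect_le {R : Type*} [Semiring R] {N : ℕ} {f : R[X]}
    (hf : f.natDegree ≤ N) : (reflect N f).natDegree ≤ N := by
  rw [natDegree_le_iff_coeff_eq_zero] at *
  intro m hm
  rw [coeff_reflect, revAt_eq_self_of_lt hm]
  exact hf m hm

lemma aux_eval_reflect {N : ℕ} (f : ℂ[X]) (hf : f.natDegree ≤ N) {l : ℂ} (hl : l ≠ 0) :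
    (reflect N f).eval l = l ^ N * f.eval l⁻¹ := by
  have : Invertible (l⁻¹ : ℂ) := invertibleOfNonzero (inv_ne_zero hl)
  have h := eval₂_reflect_mul_pow (RingHom.id ℂ) l⁻¹ N f hf
  rw [invOf_eq_inv, inv_inv] at h
  have h' : eval l (reflect N f) * (l⁻¹) ^ N = eval l⁻¹ f := h
  have hpow : (l⁻¹ : ℂ) ^ N * l ^ N = 1 := by
    rw [← mul_pow, inv_mul_cancel₀ hl, one_pow]
  calc (reflect N f).eval l = (reflect N f).eval l * ((l⁻¹) ^ N * l ^ N) := by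
        rw [hpow, mul_one]
    _ = l ^ N * f.eval l⁻¹ := by rw [← mul_assoc, h']; ring

lemma aux_reflect_X_mul {n : ℕ} {f : ℂ[X]} (hf : f.natDegree ≤ n) :
    reflect (n + 1) (X * f) = reflect n f := by
  have h := reflect_mul (X : ℂ[X]) f natDegree_X_le hf
  rw [reflect_one_X, one_mul] at h
  rw [add_comm]
  exact h

lemma aux_reflect_shift {n : ℕ} {f : ℂ[X]} (hf : f.natDegree ≤ n) :
    reflect (n + 1) (reflect n f) = X * f := by
  have h := congrArg (reflect (n + 1)) (aux_reflect_X_mul hf)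
  rw [aux_reflect_reflect] at h
  exact h.symm

/-- The Christoffel–Darboux formula in the SU(2) setting. Here `zⁿ⁺¹·φ*(z)` is expressed
as the polynomial with conjugated and reversed coefficients,
`reflect (n+1) (map conj φ)`, evaluated at `z`. -/
theorem stmt14 (F : ℕ → ℂ) (φ φt : ℕ → Polynomial ℂ)
    (h0 : φ 0 = 1) (h0' : φt 0 = 1)
    (hrec : ∀ n, φ (n + 1) =
      C ((((Real.sqrt (1 + ‖F (n + 1)‖ ^ 2))⁻¹ : ℝ) : ℂ)) *
        (X * φ n + C ((starRingEnd ℂ) (F (n + 1))) *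
          Polynomial.reflect n ((φt n).map (starRingEnd ℂ))))
    (hrec' : ∀ n, φt (n + 1) =
      C ((((Real.sqrt (1 + ‖F (n + 1)‖ ^ 2))⁻¹ : ℝ) : ℂ)) *
        (X * φt n - C ((starRingEnd ℂ) (F (n + 1))) *
          Polynomial.reflect n ((φ n).map (starRingEnd ℂ)))) :
    ∀ n : ℕ, ∀ l z : ℂ, l ≠ 0 →
      (1 - z * l⁻¹) *
          (∑ j ∈ Finset.range (n + 1),
            (φt j).eval z * (starRingEnd ℂ) ((φ j).eval (((starRingEnd ℂ) l)⁻¹))) =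
        (l⁻¹) ^ (n + 1) *
            (Polynomial.reflect (n + 1) ((φ (n + 1)).map (starRingEnd ℂ))).eval z *
            (φt (n + 1)).eval l -
          (φt (n + 1)).eval z *
            (starRingEnd ℂ) ((φ (n + 1)).eval (((starRingEnd ℂ) l)⁻¹)) := by
  have hconj2 : ∀ p : ℂ[X], (p.map (starRingEnd ℂ)).map (starRingEnd ℂ) = p := by
    intro p
    rw [Polynomial.map_map]
    have h : (starRingEnd ℂ).comp (starRingEnd ℂ) = RingHom.id ℂ :=
      RingHom.ext fun x => Complex.conj_conj x
    rw [h, Polynomial.map_id]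
  have hdeg : ∀ m, (φ m).natDegree ≤ m ∧ (φt m).natDegree ≤ m := by
    intro m
    induction m with
    | zero => simp [h0, h0']
    | succ m ih =>
      constructor
      · rw [hrec m]
        refine le_trans (natDegree_C_mul_le _ _) (le_trans (natDegree_add_le _ _) (max_le ?_ ?_))
        · refine le_trans natDegree_mul_le ?_
          have := add_le_add (natDegree_X_le (R := ℂ)) ih.1
          omega
        · refine le_trans natDegree_mul_le ?_
          have h1 : (reflect m ((φt m).map (starRingEnd ℂ))).natDegree ≤ m :=
            aux_natDegree_reflect_le (le_trans (natDegree_map_le) ih.2)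
          simp [natDegree_C]
          omega
      · rw [hrec' m]
        refine le_trans (natDegree_C_mul_le _ _) (le_trans (natDegree_sub_le _ _) (max_le ?_ ?_))
        · refine le_trans natDegree_mul_le ?_
          have := add_le_add (natDegree_X_le (R := ℂ)) ih.2
          omega
        · refine le_trans natDegree_mul_le ?_
          have h1 : (reflect m ((φ m).map (starRingEnd ℂ))).natDegree ≤ m :=
            aux_natDegree_reflect_le (le_trans (natDegree_map_le) ih.1)
          simp [natDegree_C]
          omega
  have hmapφ : ∀ m, (φ (m + 1)).map (starRingEnd ℂ) =
      C ((((Real.sqrt (1 + ‖F (m + 1)‖ ^ 2))⁻¹ : ℝ) : ℂ)) *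
        (X * (φ m).map (starRingEnd ℂ) + C (F (m + 1)) * reflect m (φt m)) := by
    intro m
    rw [hrec m]
    simp only [Polynomial.map_mul, Polynomial.map_add, Polynomial.map_X, Polynomial.map_C,
      ← reflect_map, hconj2, Complex.conj_ofReal, Complex.conj_conj]
  have hstar : ∀ m, reflect (m + 1) ((φ (m + 1)).map (starRingEnd ℂ)) =
      C ((((Real.sqrt (1 + ‖F (m + 1)‖ ^ 2))⁻¹ : ℝ) : ℂ)) *
        (reflect m ((φ m).map (starRingEnd ℂ)) + C (F (m + 1)) * (X * φt m)) := by
    intro m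
    rw [hmapφ m, reflect_C_mul, reflect_add,
      aux_reflect_X_mul (le_trans (natDegree_map_le) (hdeg m).1), reflect_C_mul,
      aux_reflect_shift (hdeg m).2]
  have hs2 : ∀ m, (((Real.sqrt (1 + ‖F m‖ ^ 2))⁻¹ : ℝ) : ℂ) *
      (((Real.sqrt (1 + ‖F m‖ ^ 2))⁻¹ : ℝ) : ℂ) *
      (1 + F m * (starRingEnd ℂ) (F m)) = 1 := by
    intro m
    have h1 : F m * (starRingEnd ℂ) (F m) = ((‖F m‖ ^ 2 : ℝ) : ℂ) := by
      rw [Complex.mul_conj]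
      norm_cast
      rw [Complex.sq_norm]
    rw [h1]
    have hrpos : (0 : ℝ) < 1 + ‖F m‖ ^ 2 := by positivity
    have hsq : Real.sqrt (1 + ‖F m‖ ^ 2) * Real.sqrt (1 + ‖F m‖ ^ 2)
        = 1 + ‖F m‖ ^ 2 := Real.mul_self_sqrt hrpos.le
    have hreal : ((Real.sqrt (1 + ‖F m‖ ^ 2))⁻¹ : ℝ) *
        ((Real.sqrt (1 + ‖F m‖ ^ 2))⁻¹ : ℝ) * (1 + ‖F m‖ ^ 2) = 1 := by
      rw [← mul_inv, hsq, inv_mul_cancel₀ hrpos.ne']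
    push_cast
    exact_mod_cast congrArg (Complex.ofReal) hreal
  intro n l z hl
  have hl' : (l⁻¹ : ℂ) ≠ 0 := inv_ne_zero hl
  have hB : ∀ m, (starRingEnd ℂ) ((φ m).eval (((starRingEnd ℂ) l)⁻¹)) =
      ((φ m).map (starRingEnd ℂ)).eval l⁻¹ := by
    intro m
    rw [eval_map]
    rw [show (l⁻¹ : ℂ) = (starRingEnd ℂ) (((starRingEnd ℂ) l)⁻¹) by
      rw [map_inv₀, Complex.conj_conj]]
    rw [eval₂_at_apply]
  have hkey : ∀ m : ℕ,
      (l⁻¹) ^ (m + 1) * (reflect (m + 1) ((φ (m + 1)).map (starRingEnd ℂ))).eval z *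
          (φt (m + 1)).eval l
        - (φt (m + 1)).eval z * ((φ (m + 1)).map (starRingEnd ℂ)).eval l⁻¹
      = ((l⁻¹) ^ m * (reflect m ((φ m).map (starRingEnd ℂ))).eval z * (φt m).eval l
          - (φt m).eval z * ((φ m).map (starRingEnd ℂ)).eval l⁻¹)
        + (1 - z * l⁻¹) * ((φt m).eval z * ((φ m).map (starRingEnd ℂ)).eval l⁻¹) := by
    intro m
    have e1 : (reflect (m + 1) ((φ (m + 1)).map (starRingEnd ℂ))).eval z
        = (((Real.sqrt (1 + ‖F (m + 1)‖ ^ 2))⁻¹ : ℝ) : ℂ) *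
          ((reflect m ((φ m).map (starRingEnd ℂ))).eval z + F (m + 1) * (z * (φt m).eval z)) := by
      rw [hstar m]
      simp [eval_mul, eval_add]
    have e2 : (φt (m + 1)).eval l
        = (((Real.sqrt (1 + ‖F (m + 1)‖ ^ 2))⁻¹ : ℝ) : ℂ) *
          (l * (φt m).eval l - (starRingEnd ℂ) (F (m + 1)) *
            (l ^ m * ((φ m).map (starRingEnd ℂ)).eval l⁻¹)) := by
      rw [hrec' m]
      simp only [eval_mul, eval_sub, eval_C, eval_X]
      rw [aux_eval_reflect _ (le_trans (natDegree_map_le) (hdeg m).1) hl]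
    have e3 : (φt (m + 1)).eval z
        = (((Real.sqrt (1 + ‖F (m + 1)‖ ^ 2))⁻¹ : ℝ) : ℂ) *
          (z * (φt m).eval z - (starRingEnd ℂ) (F (m + 1)) *
            (reflect m ((φ m).map (starRingEnd ℂ))).eval z) := by
      rw [hrec' m]
      simp [eval_mul, eval_sub]
    have e4 : ((φ (m + 1)).map (starRingEnd ℂ)).eval l⁻¹
        = (((Real.sqrt (1 + ‖F (m + 1)‖ ^ 2))⁻¹ : ℝ) : ℂ) *
          (l⁻¹ * ((φ m).map (starRingEnd ℂ)).eval l⁻¹ +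
            F (m + 1) * ((l⁻¹) ^ m * (φt m).eval l)) := by
      rw [hmapφ m]
      simp only [eval_mul, eval_add, eval_C, eval_X]
      rw [aux_eval_reflect _ (hdeg m).2 hl', inv_inv]
    rw [e1, e2, e3, e4, pow_succ]
    have hs := hs2 (m + 1)
    have hll : l * l⁻¹ = 1 := mul_inv_cancel₀ hl
    have hmm : (l⁻¹ : ℂ) ^ m * l ^ m = 1 := by
      rw [← mul_pow, inv_mul_cancel₀ hl, one_pow]
    set S := (((Real.sqrt (1 + ‖F (m + 1)‖ ^ 2))⁻¹ : ℝ) : ℂ) with hS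
    set c := F (m + 1) with hc
    set d := (starRingEnd ℂ) (F (m + 1)) with hd
    set Q := (reflect m ((φ m).map (starRingEnd ℂ))).eval z with hQ
    set T := (φt m).eval l with hT
    set P := (φt m).eval z with hP
    set B := ((φ m).map (starRingEnd ℂ)).eval l⁻¹ with hBB
    linear_combination (S * S * ((l⁻¹) ^ m * Q * T + c * z * (l⁻¹) ^ m * P * T)) * hll
      + (- (S * S * l⁻¹ * (d * Q * B + c * d * z * P * B))) * hmm
      + ((l⁻¹) ^ m * Q * T - z * l⁻¹ * P * B) * hs
  simp only [hB]
  induction n with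
  | zero =>
    rw [Finset.sum_range_one, hkey 0]
    have hq0 : reflect 0 ((φ 0).map (starRingEnd ℂ)) = 1 := by
      ext i
      simp [coeff_reflect, h0]
    simp [h0, h0', hq0]
  | succ n ih =>
    rw [Finset.sum_range_succ, mul_add, ih, hkey (n + 1)]
end
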